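/- arXiv:2410.18878 — 8 statements merged into one kernel-verified Lean document; each statement's English description precedes it below -/
import Mathlib

section
/- Let (G,w) be a weighted graph that contains no cycle of total weight at most ℓ. Then for every pair of distinct vertices a and b of G, there is at most one a–b path P in G satisfying 2·w(P) ≤ ℓ (that is, having weight at most ℓ/2). -/
open SimpleGraph

/-- If a weighted graph `(G, w)` (positive integer edge weights) contains no
cycle of total weight at most `ℓ`, then for every pair of distinct vertices `a`, `b` there is
at most one `a`-`b` path of weight at most `ℓ/2`, i.e. any two such paths coincide. -/
theorem stmt_0 {V : Type*} [Fintype V] [DecidableEq V]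
    (G : SimpleGraph V) (w : Sym2 V → ℕ)
    (hw : ∀ e ∈ G.edgeSet, 0 < w e) (ℓ : ℕ)
    (hnc : ∀ (v : V) (c : G.Walk v v), c.IsCycle → ¬ ((c.edges.map w).sum ≤ ℓ))
    (a b : V) (hab : a ≠ b)
    (p q : G.Walk a b) (hp : p.IsPath) (hq : q.IsPath)
    (hpw : 2 * (p.edges.map w).sum ≤ ℓ) (hqw : 2 * (q.edges.map w).sum ≤ ℓ) :
    p = q := by
  by_contra hne
  -- the subgraph consisting of the edges of `p` and `q`
  set G' : SimpleGraph V := SimpleGraph.fromEdgeSet {e | e ∈ p.edges ∨ e ∈ q.edges} with hG'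
  have hle : G' ≤ G := by
    intro x y hxy
    rw [hG', SimpleGraph.fromEdgeSet_adj] at hxy
    rcases hxy.1 with h | h
    · exact p.adj_of_mem_edges h
    · exact q.adj_of_mem_edges h
  have hpe : ∀ e ∈ p.edges, e ∈ G'.edgeSet := by
    intro e he
    rw [hG', SimpleGraph.edgeSet_fromEdgeSet]
    exact ⟨Or.inl he, fun hd => (G.not_isDiag_of_mem_edgeSet (p.edges_subset_edgeSet he)) hd⟩
  have hqe : ∀ e ∈ q.edges, e ∈ G'.edgeSet := by
    intro e he
    rw [hG', SimpleGraph.edgeSet_fromEdgeSet]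
    exact ⟨Or.inr he, fun hd => (G.not_isDiag_of_mem_edgeSet (q.edges_subset_edgeSet he)) hd⟩
  -- transfer `p`, `q` to `G'`; they remain distinct paths, so `G'` is not acyclic
  have hnotac : ¬ G'.IsAcyclic := by
    rw [SimpleGraph.isAcyclic_iff_path_unique]
    push_neg
    refine ⟨a, b, ⟨p.transfer G' hpe, hp.transfer hpe⟩, ⟨q.transfer G' hqe, hq.transfer hqe⟩, ?_⟩
    intro h
    apply hne
    have hval : p.transfer G' hpe = q.transfer G' hqe := congrArg Subtype.val h
    have h2 := congrArg (fun r : G'.Walk a b => r.transfer G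
      (fun e he => SimpleGraph.edgeSet_mono hle (r.edges_subset_edgeSet he))) hval
    rw [SimpleGraph.Walk.transfer_transfer, SimpleGraph.Walk.transfer_transfer] at h2
    calc p = p.transfer G p.edges_subset_edgeSet := (SimpleGraph.Walk.transfer_self p).symm
      _ = q.transfer G q.edges_subset_edgeSet := h2
      _ = q := SimpleGraph.Walk.transfer_self q
  -- extract a cycle of `G'` and transfer it to `G`
  rw [SimpleGraph.IsAcyclic] at hnotac
  push_neg at hnotac
  obtain ⟨v, c, hc⟩ := hnotac
  have hce : ∀ e ∈ c.edges, e ∈ G.edgeSet := fun e he =>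
    SimpleGraph.edgeSet_mono hle (c.edges_subset_edgeSet he)
  have hcyc : (c.transfer G hce).IsCycle := hc.transfer hce
  apply hnc v (c.transfer G hce) hcyc
  rw [SimpleGraph.Walk.edges_transfer]
  -- weight estimate: the edges of `c` form a nodup sublist of `p.edges ++ q.edges`
  have hsub : c.edges ⊆ p.edges ++ q.edges := by
    intro e he
    have := c.edges_subset_edgeSet he
    rw [hG', SimpleGraph.edgeSet_fromEdgeSet] at this
    rcases this.1 with h | h
    · exact List.mem_append.2 (Or.inl h)
    · exact List.mem_append.2 (Or.inr h)
  have hnodup : c.edges.Nodup := hc.edges_nodup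
  have hmle : (c.edges : Multiset (Sym2 V)) ≤ (↑(p.edges ++ q.edges) : Multiset (Sym2 V)) := by
    rw [Multiset.le_iff_count]
    intro e
    rw [Multiset.coe_count, Multiset.coe_count]
    by_cases he : e ∈ c.edges
    · calc List.count e c.edges ≤ 1 := List.nodup_iff_count_le_one.1 hnodup e
        _ ≤ List.count e (p.edges ++ q.edges) := List.count_pos_iff.2 (hsub he)
    · simp [List.count_eq_zero_of_not_mem he]
  have hmap : ((c.edges.map w : List ℕ) : Multiset ℕ) ≤
      (((p.edges ++ q.edges).map w : List ℕ) : Multiset ℕ) := by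
    simpa using Multiset.map_le_map (f := w) hmle
  obtain ⟨u, hu⟩ := Multiset.le_iff_exists_add.1 hmap
  have hsum := congrArg Multiset.sum hu
  simp only [Multiset.sum_coe, Multiset.sum_add, List.map_append, List.sum_append] at hsum
  omega
end

section
/- If a weighted n-vertex graph (G,w) does not contain a cycle of total weight at most ℓ, then the number of nontrivial paths P in G with 2·w(P) ≤ ℓ (i.e., of weight at most ℓ/2) is at most n(n−1)/2. -/
open SimpleGraph

/-!
Two distinct paths with the same endpoints contain a cycle in the union of their edge sets.
If both have weight at most `ℓ/2`, that cycle has weight at most `ℓ`, which is excluded;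
so a nontrivial path of weight at most `ℓ/2` is determined by its (distinct) pair of endpoints,
and there are at most `n(n-1)/2` such pairs.
-/

theorem List.Subperm.sum_map_le_sum_map {ι M : Type*} [AddCommMonoid M] [PartialOrder M]
    [IsOrderedAddMonoid M] {l₁ l₂ : List ι} (h : l₁.Subperm l₂) (f : ι → M)
    (h₀ : ∀ i ∈ l₂, 0 ≤ f i) : (l₁.map f).sum ≤ (l₂.map f).sum := by
  obtain ⟨l, hperm, hsub⟩ := h
  rw [← (hperm.map f).sum_eq]
  exact (hsub.map f).sum_le_sum (by simpa using h₀)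

namespace SimpleGraph

variable {V : Type*} {G : SimpleGraph V}

theorem Walk.support_headD {a b : V} (p : G.Walk a b) (d : V) : p.support.headD d = a := by
  cases p <;> rfl

theorem Walk.exists_isCycle_edges_subset_of_isPath_ne {a b : V} {p q : G.Walk a b}
    (hp : p.IsPath) (hq : q.IsPath) (hne : p ≠ q) :
    ∃ (v : V) (c : G.Walk v v), c.IsCycle ∧ c.edges ⊆ p.edges ++ q.edges := by
  set H : SimpleGraph V := fromEdgeSet {e | e ∈ p.edges ++ q.edges}
  have hHG : H ≤ G := fun x y hxy => by
    obtain ⟨hmem, -⟩ := (fromEdgeSet_adj _).mp hxy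
    rcases List.mem_append.mp hmem with h | h
    exacts [p.edges_subset_edgeSet h, q.edges_subset_edgeSet h]
  have hpH : ∀ e ∈ p.edges, e ∈ H.edgeSet := fun e he => by
    rw [edgeSet_fromEdgeSet]
    exact ⟨List.mem_append_left _ he, G.not_isDiag_of_mem_edgeSet (p.edges_subset_edgeSet he)⟩
  have hqH : ∀ e ∈ q.edges, e ∈ H.edgeSet := fun e he => by
    rw [edgeSet_fromEdgeSet]
    exact ⟨List.mem_append_right _ he, G.not_isDiag_of_mem_edgeSet (q.edges_subset_edgeSet he)⟩
  have hcyclic : ¬ H.IsAcyclic := fun hH => hne <| by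
    have hpq : p.transfer H hpH = q.transfer H hqH :=
      congrArg Subtype.val <|
        (hH.subsingleton_path a b).elim ⟨_, hp.transfer hpH⟩ ⟨_, hq.transfer hqH⟩
    simpa only [Walk.transfer_transfer, Walk.transfer_self] using
      congrArg (fun r : H.Walk a b => r.transfer G fun e he =>
        edgeSet_mono hHG (r.edges_subset_edgeSet he)) hpq
  obtain ⟨v, c, hc⟩ : ∃ (v : V) (c : H.Walk v v), c.IsCycle := by
    simpa [IsAcyclic] using hcyclic
  refine ⟨v, c.mapLe hHG, hc.mapLe hHG, fun e he => ?_⟩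
  rw [Walk.edges_mapLe_eq_edges] at he
  have hcH := c.edges_subset_edgeSet he
  rw [edgeSet_fromEdgeSet] at hcH
  exact hcH.1

variable {w : Sym2 V → ℕ} {ℓ : ℕ}

theorem Walk.eq_of_isPath_of_two_mul_sum_le
    (hnc : ∀ (v : V) (c : G.Walk v v), c.IsCycle → ¬ ((c.edges.map w).sum ≤ ℓ))
    {a b : V} {p q : G.Walk a b} (hp : p.IsPath) (hq : q.IsPath)
    (hwp : 2 * (p.edges.map w).sum ≤ ℓ) (hwq : 2 * (q.edges.map w).sum ≤ ℓ) : p = q := by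
  by_contra hne
  obtain ⟨v, c, hc, hsub⟩ := exists_isCycle_edges_subset_of_isPath_ne hp hq hne
  refine hnc v c hc ?_
  have hle : (c.edges.map w).sum ≤ ((p.edges ++ q.edges).map w).sum :=
    (List.subperm_of_subset hc.edges_nodup hsub).sum_map_le_sum_map w fun _ _ => Nat.zero_le _
  rw [List.map_append, List.sum_append] at hle
  omega

theorem Walk.support_pair_eq_of_endpoints_eq
    (hnc : ∀ (v : V) (c : G.Walk v v), c.IsCycle → ¬ ((c.edges.map w).sum ≤ ℓ))
    {a b c d : V} {p : G.Walk a b} {q : G.Walk c d} (hp : p.IsPath) (hq : q.IsPath)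
    (hwp : 2 * (p.edges.map w).sum ≤ ℓ) (hwq : 2 * (q.edges.map w).sum ≤ ℓ)
    (h : s(a, b) = s(c, d)) :
    s(p.support, p.support.reverse) = s(q.support, q.support.reverse) := by
  rcases Sym2.eq_iff.mp h with ⟨rfl, rfl⟩ | ⟨rfl, rfl⟩
  · rw [eq_of_isPath_of_two_mul_sum_le hnc hp hq hwp hwq]
  · have hwq' : 2 * (q.reverse.edges.map w).sum ≤ ℓ := by
      rwa [Walk.edges_reverse, List.map_reverse, List.sum_reverse]
    rw [eq_of_isPath_of_two_mul_sum_le hnc hp hq.reverse hwp hwq', Walk.support_reverse,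
      List.reverse_reverse, Sym2.eq_swap]

end SimpleGraph

theorem stmt_1_general {V : Type*} [Fintype V]
    (G : SimpleGraph V) (w : Sym2 V → ℕ)
    (ℓ : ℕ)
    (hnc : ∀ (v : V) (c : G.Walk v v), c.IsCycle → ¬ ((c.edges.map w).sum ≤ ℓ)) :
    Set.ncard {q : Sym2 (List V) |
        ∃ (a b : V) (p : G.Walk a b), p.IsPath ∧ 0 < p.length ∧
          2 * (p.edges.map w).sum ≤ ℓ ∧ q = s(p.support, p.support.reverse)} ≤
      Fintype.card V * (Fintype.card V - 1) / 2 := by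
  classical
  rcases isEmpty_or_nonempty V with _ | ⟨⟨v₀⟩⟩
  · simp
  have hends {a b : V} (p : G.Walk a b) :
      s(p.support, p.support.reverse).map (List.headD · v₀) = s(a, b) := by
    rw [Sym2.map_mk, ← Walk.support_reverse, Walk.support_headD, Walk.support_headD]
  calc _ ≤ {e : Sym2 V | ¬ e.IsDiag}.ncard := by
        refine Set.ncard_le_ncard_of_injOn (Sym2.map (List.headD · v₀)) ?_ ?_ (Set.toFinite _)
        · rintro _ ⟨a, b, p, hp, hlen, -, rfl⟩
          rw [Set.mem_ofPred_eq, hends, Sym2.mk_isDiag_iff]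
          rintro rfl
          exact hlen.ne' (Walk.isPath_iff_nil.mp hp).length_eq_zero
        · rintro _ ⟨a, b, p, hp, -, hwp, rfl⟩ _ ⟨c, d, q, hq, -, hwq, rfl⟩ h
          rw [hends, hends] at h
          exact Walk.support_pair_eq_of_endpoints_eq hnc hp hq hwp hwq h
    _ = Fintype.card V * (Fintype.card V - 1) / 2 := by
        rw [← Nat.card_coe_set_eq, Nat.card_eq_fintype_card, ← Nat.choose_two_right]
        exact Sym2.card_subtype_not_diag

/-- If a weighted `n`-vertex graph `(G, w)` (positive integer edge weights)
contains no cycle of total weight at most `ℓ`, then the number of nontrivial paths of weight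
at most `ℓ/2` is at most `n(n-1)/2`.  Paths are counted as undirected objects: a path is
identified with the unordered pair `s(support, reversed support)` of its vertex sequences,
so a path and its reverse are counted once. -/
theorem stmt_1 {V : Type*} [Fintype V] [DecidableEq V]
    (G : SimpleGraph V) (w : Sym2 V → ℕ)
    (hw : ∀ e ∈ G.edgeSet, 0 < w e) (ℓ : ℕ)
    (hnc : ∀ (v : V) (c : G.Walk v v), c.IsCycle → ¬ ((c.edges.map w).sum ≤ ℓ)) :
    Set.ncard {q : Sym2 (List V) |
        ∃ (a b : V) (p : G.Walk a b), p.IsPath ∧ 0 < p.length ∧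
          2 * (p.edges.map w).sum ≤ ℓ ∧ q = s(p.support, p.support.reverse)} ≤
      Fintype.card V * (Fintype.card V - 1) / 2 :=
  stmt_1_general G w ℓ hnc
end

section
/- Let P be a path and C a cycle in a graph G such that P and C share at least one vertex. Then the number of chords of P relative to C equals the number of connected components of the intersection graph P ∩ C minus one. -/
/-!
Number the vertices of the path `P` as `P₀, …, Pₙ` and let `K` be a subgraph (the cycle `C`).
The vertices of `P ∩ K` are the `Pᵢ` in `K`, and its edges are the steps `Pᵢ Pᵢ₊₁` that are
edges of `K`. Since `P` is a path, `P ∩ K` is a disjoint union of runs of consecutive such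
steps, with one component for each index `j` at which a run starts (`Pⱼ ∈ K`, and `Pⱼ₋₁ Pⱼ`
is not an edge of `K`). A chord is the subpath of `P` from `Pᵢ` to `Pⱼ`, where `i < j` are
consecutive indices of vertices in `K` and `Pⱼ₋₁ Pⱼ` is not an edge of `K`. It is therefore
determined by `j`, and the indices `j` that occur are exactly the run starts other than the
first one.
-/

open SimpleGraph

namespace SimpleGraph.Walk

variable {V : Type*} {G : SimpleGraph V} {u v x y : V}

theorem support_eq_take_drop_of_getVert_eq {p : G.Walk u v} {R : G.Walk x y} {k : ℕ}
    (hk : k + R.length ≤ p.length) (hR : ∀ i ≤ R.length, R.getVert i = p.getVert (k + i)) :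
    R.support = (p.support.drop k).take (R.length + 1) := by
  apply List.ext_getElem
  · simp only [length_support, List.length_take, List.length_drop]
    omega
  · intro i hi _
    rw [length_support] at hi
    rw [List.getElem_take, List.getElem_drop, support_getElem_eq_getVert,
      support_getElem_eq_getVert, hR i (by omega)]

theorem support_infix_support_iff {p : G.Walk u v} {R : G.Walk x y} :
    R.support <:+: p.support ↔
      ∃ k, k + R.length ≤ p.length ∧ ∀ i ≤ R.length, R.getVert i = p.getVert (k + i) := by
  constructor
  · intro h
    obtain ⟨k, hk, h⟩ := List.infix_iff_getElem?.mp h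
    simp only [length_support] at hk h
    refine ⟨k, by omega, fun i hi => ?_⟩
    have h' := h i (by omega)
    rw [← getVert_eq_support_getElem? _ (by omega), support_getElem_eq_getVert,
      Option.some_inj, add_comm] at h'
    exact h'.symm
  · rintro ⟨k, hk, hR⟩
    rw [support_eq_take_drop_of_getVert_eq hk hR]
    exact (List.take_prefix _ _).isInfix.trans (List.drop_suffix _ _).isInfix

variable {p : G.Walk u v} {K : G.Subgraph}

def IsRelativeChord (p : G.Walk u v) (K : G.Subgraph) (R : G.Walk x y) : Prop :=
  R.IsPath ∧ 0 < R.length ∧ R.support <:+: p.support ∧ x ∈ K.verts ∧ y ∈ K.verts ∧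
    (∀ w ∈ R.support, w ≠ x → w ≠ y → w ∉ K.verts) ∧ ∀ e ∈ R.edges, e ∉ K.edgeSet

def relativeChords (p : G.Walk u v) (K : G.Subgraph) : Set (List V) :=
  {r | ∃ (x y : V) (R : G.Walk x y), p.IsRelativeChord K R ∧ r = R.support}

def IsChordSpan (p : G.Walk u v) (K : G.Subgraph) (k j : ℕ) : Prop :=
  k < j ∧ p.getVert k ∈ K.verts ∧ p.getVert j ∈ K.verts ∧
    (∀ i, k < i → i < j → p.getVert i ∉ K.verts) ∧ ¬K.Adj (p.getVert (j - 1)) (p.getVert j)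

section Offset

variable {R : G.Walk x y} {k : ℕ}

theorem IsPath.forall_inner_notMem_iff (hp : p.IsPath) (s : Set V)
    (hk : k + R.length ≤ p.length) (hR : ∀ i ≤ R.length, R.getVert i = p.getVert (k + i)) :
    (∀ w ∈ R.support, w ≠ x → w ≠ y → w ∉ s) ↔
      ∀ i, k < i → i < k + R.length → p.getVert i ∉ s := by
  have hinj {i j : ℕ} (hi : i ≤ p.length) (hj : j ≤ p.length) (h : p.getVert i = p.getVert j) :
      i = j := hp.getVert_injOn hi hj h
  have hx : x = p.getVert k := by simpa using hR 0 (Nat.zero_le _)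
  have hy : y = p.getVert (k + R.length) := by simpa using hR R.length le_rfl
  constructor
  · intro h i hki him
    have hmem : R.getVert (i - k) ∈ R.support := R.getVert_mem_support _
    rw [hR _ (by omega), Nat.add_sub_cancel' hki.le] at hmem
    refine h _ hmem (fun hix => ?_) (fun hiy => ?_)
    · have := hinj (by omega) (by omega) (hix.trans hx)
      omega
    · have := hinj (by omega) (by omega) (hiy.trans hy)
      omega
  · intro h w hw hwx hwy
    obtain ⟨t, rfl, ht⟩ := mem_support_iff_exists_getVert.mp hw
    rw [hR t ht] at hwx hwy ⊢
    refine h _ ?_ ?_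
    · rcases Nat.eq_zero_or_pos t with rfl | ht0
      · exact absurd hx.symm hwx
      · omega
    · rcases eq_or_lt_of_le ht with rfl | htm
      · exact absurd hy.symm hwy
      · omega

theorem forall_mem_edges_notMem_edgeSet_iff (hm : 0 < R.length)
    (hR : ∀ i ≤ R.length, R.getVert i = p.getVert (k + i))
    (hinner : ∀ i, k < i → i < k + R.length → p.getVert i ∉ K.verts) :
    (∀ e ∈ R.edges, e ∉ K.edgeSet) ↔
      ¬K.Adj (p.getVert (k + R.length - 1)) (p.getVert (k + R.length)) := by
  have hlast : s(p.getVert (k + R.length - 1), p.getVert (k + R.length)) ∈ R.edges := by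
    refine (mk_mem_edges_iff_exists R).mpr ⟨R.length - 1, by omega, ?_⟩
    rw [hR _ (by omega), hR _ (by omega), Nat.sub_add_cancel hm, Nat.add_sub_assoc hm]
  refine ⟨fun h hadj => h _ hlast (Subgraph.mem_edgeSet.mpr hadj), fun h e he => ?_⟩
  induction e using Sym2.ind with
  | _ a b =>
    obtain ⟨t, ht, heq⟩ := (mk_mem_edges_iff_exists R).mp he
    rw [← heq, hR t (by omega), hR (t + 1) (by omega), Subgraph.mem_edgeSet]
    intro hadj
    rcases Nat.lt_or_ge (t + 1) R.length with htm | htm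
    · exact hinner (k + (t + 1)) (by omega) (by omega) hadj.snd_mem
    · obtain rfl : t = R.length - 1 := by omega
      rw [Nat.sub_add_cancel hm, ← Nat.add_sub_assoc hm] at hadj
      exact h hadj

theorem IsPath.isRelativeChord_iff (hp : p.IsPath)
    (hk : k + R.length ≤ p.length) (hR : ∀ i ≤ R.length, R.getVert i = p.getVert (k + i)) :
    p.IsRelativeChord K R ↔ p.IsChordSpan K k (k + R.length) := by
  have hx : x = p.getVert k := by simpa using hR 0 (Nat.zero_le _)
  have hy : y = p.getVert (k + R.length) := by simpa using hR R.length le_rfl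
  have hinner := hp.forall_inner_notMem_iff K.verts hk hR
  constructor
  · rintro ⟨-, hm, -, hxK, hyK, hin, hedges⟩
    exact ⟨by omega, hx ▸ hxK, hy ▸ hyK, hinner.mp hin,
      (forall_mem_edges_notMem_edgeSet_iff hm hR (hinner.mp hin)).mp hedges⟩
  · rintro ⟨hm, hxK, hyK, hin, hlast⟩
    have hinfix := support_infix_support_iff.mpr ⟨k, hk, hR⟩
    refine ⟨(isPath_def _).mpr (hp.support_nodup.sublist hinfix.sublist), by omega, hinfix,
      hx ▸ hxK, hy ▸ hyK, hinner.mpr hin, ?_⟩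
    exact (forall_mem_edges_notMem_edgeSet_iff (by omega) hR hin).mpr hlast

end Offset

open Classical in
/-- The condition on `K.Adj` holds for `j = 0`, where `0 - 1 = 0`, since `K.Adj` is
irreflexive. -/
noncomputable def runStarts (p : G.Walk u v) (K : G.Subgraph) : Finset ℕ :=
  (Finset.range (p.length + 1)).filter fun j =>
    p.getVert j ∈ K.verts ∧ ¬K.Adj (p.getVert (j - 1)) (p.getVert j)

open Classical in
noncomputable def chordEnds (p : G.Walk u v) (K : G.Subgraph) : Finset ℕ :=
  (runStarts p K).filter fun j => ∃ i < j, p.getVert i ∈ K.verts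

open Classical in
noncomputable def prevIdxInVerts (p : G.Walk u v) (K : G.Subgraph) (j : ℕ) : ℕ :=
  Nat.findGreatest (fun i => p.getVert i ∈ K.verts) (j - 1)

theorem mem_runStarts {j : ℕ} : j ∈ runStarts p K ↔
    j ≤ p.length ∧ p.getVert j ∈ K.verts ∧ ¬K.Adj (p.getVert (j - 1)) (p.getVert j) := by
  simp [runStarts]

theorem mem_chordEnds {j : ℕ} :
    j ∈ chordEnds p K ↔ j ∈ runStarts p K ∧ ∃ i < j, p.getVert i ∈ K.verts := by
  simp [chordEnds]

theorem le_length_of_mem_chordEnds {j : ℕ} (hj : j ∈ chordEnds p K) : j ≤ p.length :=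
  (mem_runStarts.mp (mem_chordEnds.mp hj).1).1

theorem card_chordEnds : (chordEnds p K).card = (runStarts p K).card - 1 := by
  classical
  by_cases hI : ∃ i, i ≤ p.length ∧ p.getVert i ∈ K.verts
  · have hmin {j : ℕ} (hj : j ≤ p.length) (hjK : p.getVert j ∈ K.verts) : Nat.find hI ≤ j :=
      Nat.find_min' hI ⟨hj, hjK⟩
    obtain ⟨hi₀, hi₀K⟩ := Nat.find_spec hI
    have hmem : Nat.find hI ∈ runStarts p K := by
      refine mem_runStarts.mpr ⟨hi₀, hi₀K, fun hadj => hadj.ne ?_⟩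
      have := hmin (by omega) hadj.fst_mem
      rw [show Nat.find hI - 1 = Nat.find hI by omega]
    have herase : chordEnds p K = (runStarts p K).erase (Nat.find hI) := by
      ext j
      rw [mem_chordEnds, Finset.mem_erase]
      constructor
      · rintro ⟨hj, i, hij, hiK⟩
        have := hmin (by have := (mem_runStarts.mp hj).1; omega) hiK
        exact ⟨by omega, hj⟩
      · rintro ⟨hne, hj⟩
        obtain ⟨hjn, hjK, -⟩ := mem_runStarts.mp hj
        exact ⟨hj, _, by have := hmin hjn hjK; omega, hi₀K⟩
    rw [herase, Finset.card_erase_of_mem hmem]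
  · have hempty : runStarts p K = ∅ :=
      Finset.eq_empty_of_forall_notMem fun j hj =>
        hI ⟨j, (mem_runStarts.mp hj).1, (mem_runStarts.mp hj).2.1⟩
    simp [chordEnds, hempty]

theorem isChordSpan_iff {k j : ℕ} (hj : j ≤ p.length) :
    p.IsChordSpan K k j ↔ j ∈ chordEnds p K ∧ k = prevIdxInVerts p K j := by
  classical
  simp only [mem_chordEnds, mem_runStarts, prevIdxInVerts]
  constructor
  · rintro ⟨hkj, hkK, hjK, hgap, hadj⟩
    refine ⟨⟨⟨hj, hjK, hadj⟩, k, hkj, hkK⟩, ?_⟩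
    refine (Nat.findGreatest_eq_iff.mpr ⟨by omega, fun _ => hkK, fun i hki hij => ?_⟩).symm
    exact hgap i hki (by omega)
  · rintro ⟨⟨⟨-, hjK, hadj⟩, i, hij, hiK⟩, rfl⟩
    have hi : i ≤ j - 1 := Nat.le_sub_one_of_lt hij
    have := Nat.le_findGreatest (P := (p.getVert · ∈ K.verts)) hi hiK
    have := Nat.findGreatest_le (P := (p.getVert · ∈ K.verts)) (j - 1)
    exact ⟨by omega, Nat.findGreatest_spec (P := (p.getVert · ∈ K.verts)) hi hiK, hjK,
      fun l hkl hlj => Nat.findGreatest_is_greatest hkl (Nat.le_sub_one_of_lt hlj), hadj⟩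

theorem IsPath.exists_isRelativeChord_support_eq (hp : p.IsPath) {j : ℕ}
    (hj : j ∈ chordEnds p K) :
    ∃ R : G.Walk (p.getVert (prevIdxInVerts p K j)) (p.getVert j), p.IsRelativeChord K R ∧
      R.support = (p.support.drop (prevIdxInVerts p K j)).take (j - prevIdxInVerts p K j + 1) := by
  have hjn := le_length_of_mem_chordEnds hj
  have hspan := (isChordSpan_iff hjn).mpr ⟨hj, rfl⟩
  set i := prevIdxInVerts p K j
  have hij : i ≤ j := hspan.1.le
  let R := ((p.drop i).take (j - i)).copy rfl (by rw [drop_getVert, Nat.add_sub_cancel' hij])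
  have hlen : R.length = j - i := by
    simp only [R, length_copy, take_length, drop_length]
    omega
  have hR : ∀ t ≤ R.length, R.getVert t = p.getVert (i + t) := by
    intro t ht
    rw [hlen] at ht
    simp only [R, getVert_copy, take_getVert, drop_getVert, min_eq_right ht]
  have hk : i + R.length ≤ p.length := by omega
  refine ⟨R, (hp.isRelativeChord_iff hk hR).mpr ?_, ?_⟩
  · rwa [hlen, Nat.add_sub_cancel' hij]
  · rw [support_eq_take_drop_of_getVert_eq hk hR, hlen]

theorem IsPath.relativeChords_eq_image (hp : p.IsPath) :
    relativeChords p K =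
      (fun j => (p.support.drop (prevIdxInVerts p K j)).take (j - prevIdxInVerts p K j + 1)) ''
        chordEnds p K := by
  ext r
  constructor
  · rintro ⟨x, y, R, hR, rfl⟩
    obtain ⟨k, hk, hRk⟩ := support_infix_support_iff.mp hR.2.2.1
    obtain ⟨hj, hkj⟩ := (isChordSpan_iff hk).mp ((hp.isRelativeChord_iff hk hRk).mp hR)
    refine ⟨_, hj, ?_⟩
    dsimp only
    rw [← hkj, support_eq_take_drop_of_getVert_eq hk hRk, Nat.add_sub_cancel_left]
  · rintro ⟨j, hj, rfl⟩
    obtain ⟨R, hR, hsupp⟩ := hp.exists_isRelativeChord_support_eq hj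
    exact ⟨_, _, R, hR, hsupp.symm⟩

theorem IsPath.ncard_relativeChords_eq_card_chordEnds (hp : p.IsPath) :
    (relativeChords p K).ncard = (chordEnds p K).card := by
  rw [hp.relativeChords_eq_image, Set.InjOn.ncard_image, Set.ncard_coe_finset]
  intro j hj j' hj' h
  obtain ⟨R, -, hsupp⟩ := hp.exists_isRelativeChord_support_eq hj
  obtain ⟨R', -, hsupp'⟩ := hp.exists_isRelativeChord_support_eq hj'
  have hlast := congrArg List.getLast? (hsupp.trans (h.trans hsupp'.symm))
  rw [List.getLast?_eq_some_getLast R.support_ne_nil, List.getLast?_eq_some_getLast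
    R'.support_ne_nil, getLast_support, getLast_support, Option.some_inj] at hlast
  exact hp.getVert_injOn (le_length_of_mem_chordEnds hj) (le_length_of_mem_chordEnds hj') hlast

open Classical in
noncomputable def runStart (p : G.Walk u v) (K : G.Subgraph) (i : ℕ) : ℕ :=
  Nat.findGreatest (fun j => ¬K.Adj (p.getVert (j - 1)) (p.getVert j)) i

theorem runStart_le (i : ℕ) : runStart p K i ≤ i := by
  classical exact Nat.findGreatest_le i

theorem runStart_eq_self {i : ℕ} (h : ¬K.Adj (p.getVert (i - 1)) (p.getVert i)) :
    runStart p K i = i := by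
  classical exact Nat.findGreatest_eq h

theorem runStart_succ {i : ℕ} (h : K.Adj (p.getVert i) (p.getVert (i + 1))) :
    runStart p K (i + 1) = runStart p K i := by
  classical exact Nat.findGreatest_of_not (by simpa using h)

theorem runStart_mem_runStarts {i : ℕ} (hi : i ≤ p.length) (hiK : p.getVert i ∈ K.verts) :
    runStart p K i ∈ runStarts p K := by
  classical
  let P j := ¬K.Adj (p.getVert (j - 1)) (p.getVert j)
  have hle := runStart_le (p := p) (K := K) i
  have hstart : P (runStart p K i) :=
    Nat.findGreatest_spec (P := P) (Nat.zero_le i) fun h => h.ne rfl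
  refine mem_runStarts.mpr ⟨by omega, ?_, hstart⟩
  rcases eq_or_lt_of_le hle with heq | hlt
  · rwa [heq]
  · have := Nat.findGreatest_is_greatest (P := P) (Nat.lt_succ_self _) hlt
    simp only [P, not_not] at this
    exact this.fst_mem

theorem IsPath.idxOf_getVert [DecidableEq V] (hp : p.IsPath) {i : ℕ} (hi : i ≤ p.length) :
    p.support.idxOf (p.getVert i) = i := by
  rw [getVert_eq_support_getElem p hi]
  exact hp.support_nodup.idxOf_getElem _ _

theorem getVert_mem_verts_toSubgraph_inf {i : ℕ} (hiK : p.getVert i ∈ K.verts) :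
    p.getVert i ∈ (p.toSubgraph ⊓ K).verts :=
  ⟨p.mem_verts_toSubgraph.mpr (p.getVert_mem_support i), hiK⟩

theorem IsPath.runStart_idxOf_eq_of_adj [DecidableEq V] (hp : p.IsPath) {w w' : V}
    (h : (p.toSubgraph ⊓ K).Adj w w') :
    runStart p K (p.support.idxOf w) = runStart p K (p.support.idxOf w') := by
  obtain ⟨hpa, hKa⟩ := Subgraph.inf_adj.mp h
  obtain ⟨i, he, hi⟩ := (toSubgraph_adj_iff p).mp hpa
  rcases Sym2.eq_iff.mp he with ⟨rfl, rfl⟩ | ⟨rfl, rfl⟩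
  · rw [hp.idxOf_getVert hi.le, hp.idxOf_getVert hi, runStart_succ hKa]
  · rw [hp.idxOf_getVert hi.le, hp.idxOf_getVert hi, runStart_succ hKa.symm]

theorem IsPath.runStart_idxOf_eq_of_reachable [DecidableEq V] (hp : p.IsPath)
    {w w' : (p.toSubgraph ⊓ K).verts} (h : (p.toSubgraph ⊓ K).coe.Reachable w w') :
    runStart p K (p.support.idxOf w.1) = runStart p K (p.support.idxOf w'.1) := by
  obtain ⟨q⟩ := h
  induction q with
  | nil => rfl
  | cons hadj _ ih => exact (hp.runStart_idxOf_eq_of_adj hadj).trans ih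

theorem reachable_runStart {i : ℕ} (hi : i ≤ p.length) (hiK : p.getVert i ∈ K.verts)
    (hw : p.getVert (runStart p K i) ∈ (p.toSubgraph ⊓ K).verts) :
    (p.toSubgraph ⊓ K).coe.Reachable ⟨_, getVert_mem_verts_toSubgraph_inf hiK⟩ ⟨_, hw⟩ := by
  induction i with
  | zero =>
    simp only [Nat.eq_zero_of_le_zero (runStart_le 0)]
    rfl
  | succ i ih =>
    by_cases hadj : K.Adj (p.getVert i) (p.getVert (i + 1))
    · simp only [runStart_succ hadj] at hw ⊢
      have hstep : (p.toSubgraph ⊓ K).coe.Adj ⟨_, getVert_mem_verts_toSubgraph_inf hiK⟩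
          ⟨_, getVert_mem_verts_toSubgraph_inf hadj.fst_mem⟩ :=
        ⟨(p.toSubgraph_adj_getVert (by omega)).symm, hadj.symm⟩
      exact hstep.reachable.trans (ih (by omega) hadj.fst_mem hw)
    · simp only [runStart_eq_self (show ¬K.Adj (p.getVert (i + 1 - 1)) _ by simpa using hadj)]
      rfl

theorem IsPath.card_connectedComponent_toSubgraph_inf (hp : p.IsPath) :
    Nat.card (p.toSubgraph ⊓ K).coe.ConnectedComponent = (runStarts p K).card := by
  classical
  let ψ : runStarts p K → (p.toSubgraph ⊓ K).coe.ConnectedComponent := fun j =>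
    (p.toSubgraph ⊓ K).coe.connectedComponentMk
      ⟨_, getVert_mem_verts_toSubgraph_inf (mem_runStarts.mp j.2).2.1⟩
  have hψ : Function.Bijective ψ := by
    constructor
    · rintro ⟨j, hj⟩ ⟨j', hj'⟩ h
      have := hp.runStart_idxOf_eq_of_reachable (ConnectedComponent.exact h)
      obtain ⟨hjn, -, hjs⟩ := mem_runStarts.mp hj
      obtain ⟨hjn', -, hjs'⟩ := mem_runStarts.mp hj'
      rw [hp.idxOf_getVert hjn, hp.idxOf_getVert hjn', runStart_eq_self hjs,
        runStart_eq_self hjs'] at this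
      exact Subtype.ext this
    · intro C
      induction C using ConnectedComponent.ind with
      | _ w =>
        obtain ⟨i, hiw, hi⟩ := mem_support_iff_exists_getVert.mp
          (p.mem_verts_toSubgraph.mp w.2.1)
        have hiK : p.getVert i ∈ K.verts := hiw ▸ w.2.2
        have hw : (⟨_, getVert_mem_verts_toSubgraph_inf hiK⟩ : (p.toSubgraph ⊓ K).verts) = w :=
          Subtype.ext hiw
        exact ⟨⟨_, runStart_mem_runStarts hi hiK⟩,
          ConnectedComponent.sound (hw ▸ (reachable_runStart hi hiK _).symm)⟩
  rw [← Nat.card_eq_of_bijective ψ hψ, Nat.card_eq_finsetCard]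

theorem IsPath.ncard_relativeChords (hp : p.IsPath) (K : G.Subgraph) :
    (relativeChords p K).ncard = Nat.card (p.toSubgraph ⊓ K).coe.ConnectedComponent - 1 := by
  rw [hp.ncard_relativeChords_eq_card_chordEnds, card_chordEnds,
    hp.card_connectedComponent_toSubgraph_inf]

end SimpleGraph.Walk

theorem stmt_4_general {V : Type*}
    (G : SimpleGraph V) (a b u : V)
    (p : G.Walk a b) (hp : p.IsPath)
    (c : G.Walk u u) :
    Set.ncard {r : List V |
        ∃ (x y : V) (R : G.Walk x y), R.IsPath ∧ 0 < R.length ∧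
          R.support.IsInfix p.support ∧
          x ∈ c.support ∧ y ∈ c.support ∧
          (∀ v ∈ R.support, v ≠ x → v ≠ y → v ∉ c.support) ∧
          (∀ e ∈ R.edges, e ∉ c.edges) ∧
          r = R.support} =
      Nat.card ((p.toSubgraph ⊓ c.toSubgraph).coe.ConnectedComponent) - 1 := by
  have h := hp.ncard_relativeChords c.toSubgraph
  simp only [Walk.relativeChords, Walk.IsRelativeChord, Walk.mem_verts_toSubgraph,
    Walk.mem_edges_toSubgraph, and_assoc] at h
  exact h

/-- Let `P` be a path and `C` a cycle in a graph `G` sharing at least one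
vertex.  Then the number of chords of `P` relative to `C` equals the number of connected
components of the intersection graph `P ∩ C` minus one.

A chord of `P` relative to `C` is a (maximal) subpath `R` of `P` with at least one edge whose
two endpoints lie on `C`, none of whose internal vertices lies on `C`, and none of whose edges
is an edge of `C`; such a subpath is automatically maximal.  Chords are identified with their
vertex sequences (infixes of the vertex sequence of `P`).  The intersection graph `P ∩ C` is
expressed as the meet of the corresponding subgraphs. -/
theorem stmt_4 {V : Type*} [Fintype V] [DecidableEq V]
    (G : SimpleGraph V) (a b u : V)
    (p : G.Walk a b) (hp : p.IsPath)
    (c : G.Walk u u) (hc : c.IsCycle)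
    (hshare : ∃ x, x ∈ p.support ∧ x ∈ c.support) :
    Set.ncard {r : List V |
        ∃ (x y : V) (R : G.Walk x y), R.IsPath ∧ 0 < R.length ∧
          R.support.IsInfix p.support ∧
          x ∈ c.support ∧ y ∈ c.support ∧
          (∀ v ∈ R.support, v ≠ x → v ≠ y → v ∉ c.support) ∧
          (∀ e ∈ R.edges, e ∉ c.edges) ∧
          r = R.support} =
      Nat.card ((p.toSubgraph ⊓ c.toSubgraph).coe.ConnectedComponent) - 1 :=
  stmt_4_general G a b u p hp c
end

section
/- Let k ≥ 1 be an integer and let F be a finite family of at least 64k³ open intervals on the real line with pairwise distinct endpoints (all 2|F| endpoint values are distinct). Then F contains a subfamily of 4k intervals that are either pairwise consecutive, or pairwise crossing, or pairwise parallel. -/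
/-!
Nesting and lying entirely to the left are strict partial orders on intervals. By Mirsky's
theorem (ranking each element by the largest chain ending at it), a set of more than `m * n`
elements of a strict order contains a chain of `m + 1` or an antichain of `n + 1` elements.
So `64k³` intervals contain `4k` pairwise nested ones or `16k²` pairwise non-nested ones, and the
latter contain `4k` pairwise disjoint or `4k` pairwise overlapping ones. Two intervals with
distinct endpoints that neither nest nor are disjoint cross.
-/

/-- Two intervals (pairs `(s, t)` with `s < t`) are *consecutive* if, listing them with the
smaller left endpoint first as `(s₁,t₁), (s₂,t₂)`, we have `s₁ < t₁ < s₂ < t₂`. -/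
def IntervalConsecutive (I J : ℝ × ℝ) : Prop :=
  (I.1 < I.2 ∧ I.2 < J.1 ∧ J.1 < J.2) ∨ (J.1 < J.2 ∧ J.2 < I.1 ∧ I.1 < I.2)

/-- Two intervals are *crossing* if, listing them with the smaller left endpoint first as
`(s₁,t₁), (s₂,t₂)`, we have `s₁ < s₂ < t₁ < t₂`. -/
def IntervalCrossing (I J : ℝ × ℝ) : Prop :=
  (I.1 < J.1 ∧ J.1 < I.2 ∧ I.2 < J.2) ∨ (J.1 < I.1 ∧ I.1 < J.2 ∧ J.2 < I.2)

/-- Two intervals are *parallel* if, listing them with the smaller left endpoint first as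
`(s₁,t₁), (s₂,t₂)`, we have `s₁ < s₂ < t₂ < t₁`. -/
def IntervalParallel (I J : ℝ × ℝ) : Prop :=
  (I.1 < J.1 ∧ J.1 < J.2 ∧ J.2 < I.2) ∨ (J.1 < I.1 ∧ I.1 < I.2 ∧ I.2 < J.2)

/-- A family of intervals has *pairwise distinct endpoints* if all the endpoint values
occurring among (distinct) intervals of the family are pairwise distinct. -/
def DistinctEndpoints (F : Finset (ℝ × ℝ)) : Prop :=
  ∀ I ∈ F, ∀ J ∈ F, I ≠ J → I.1 ≠ J.1 ∧ I.1 ≠ J.2 ∧ I.2 ≠ J.1 ∧ I.2 ≠ J.2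

open Finset

section Mirsky

variable {α : Type*} (r : α → α → Prop)

open scoped Classical in
noncomputable def chainsBelow (S : Finset α) (x : α) : Finset (Finset α) :=
  S.powerset.filter fun C => IsChain r (C : Set α) ∧ ∀ a ∈ C, a = x ∨ r a x

noncomputable def chainHeight (S : Finset α) (x : α) : ℕ :=
  (chainsBelow r S x).sup card

variable {r} {S : Finset α}

theorem mem_chainsBelow {C : Finset α} {x : α} :
    C ∈ chainsBelow r S x ↔
      C ⊆ S ∧ IsChain r (C : Set α) ∧ ∀ a ∈ C, a = x ∨ r a x := by
  classical
  rw [chainsBelow, mem_filter, mem_powerset]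

theorem singleton_mem_chainsBelow {x : α} (hx : x ∈ S) : {x} ∈ chainsBelow r S x :=
  mem_chainsBelow.2 ⟨singleton_subset_iff.2 hx, Set.Subsingleton.isChain (by simp), by simp⟩

theorem one_le_chainHeight {x : α} (hx : x ∈ S) : 1 ≤ chainHeight r S x :=
  le_sup (f := card) (singleton_mem_chainsBelow hx)

theorem chainHeight_le {m : ℕ} (hS : ∀ C ⊆ S, IsChain r (C : Set α) → #C ≤ m) (x : α) :
    chainHeight r S x ≤ m :=
  Finset.sup_le fun _ hC => hS _ (mem_chainsBelow.1 hC).1 (mem_chainsBelow.1 hC).2.1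

theorem chainHeight_lt_chainHeight [IsStrictOrder α r] {x y : α} (hx : x ∈ S)
    (hy : y ∈ S) (hxy : r x y) : chainHeight r S x < chainHeight r S y := by
  classical
  obtain ⟨C, hC, hCx⟩ := exists_mem_eq_sup _ ⟨_, singleton_mem_chainsBelow hx⟩ card
  obtain ⟨hCS, hchain, hbelow⟩ := mem_chainsBelow.1 hC
  have hbelow_y : ∀ a ∈ C, r a y := fun a ha => by
    rcases hbelow a ha with rfl | hax
    exacts [hxy, _root_.trans hax hxy]
  have hyC : y ∉ C := fun hyC => irrefl y (hbelow_y y hyC)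
  have hins : insert y C ∈ chainsBelow r S y := by
    refine mem_chainsBelow.2 ⟨insert_subset hy hCS, ?_, fun a ha => ?_⟩
    · rw [coe_insert]
      exact hchain.insert fun a ha _ => Or.inr (hbelow_y a ha)
    · rcases mem_insert.1 ha with rfl | ha
      exacts [Or.inl rfl, Or.inr (hbelow_y a ha)]
  calc chainHeight r S x < #(insert y C) := by
        rw [card_insert_of_notMem hyC, chainHeight, hCx]; exact Nat.lt_succ_self _
    _ ≤ chainHeight r S y := le_sup (f := card) hins

theorem exists_chain_or_antichain_card_eq [IsStrictOrder α r] (S : Finset α)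
    {m n : ℕ} (hS : m * n < #S) :
    (∃ C ⊆ S, #C = m + 1 ∧ IsChain r (C : Set α)) ∨
      ∃ A ⊆ S, #A = n + 1 ∧ IsAntichain r (A : Set α) := by
  classical
  by_cases hlong : ∃ C ⊆ S, IsChain r (C : Set α) ∧ m < #C
  · obtain ⟨C, hCS, hC, hCm⟩ := hlong
    obtain ⟨C', hC'C, hC'⟩ := exists_subset_card_eq hCm
    exact Or.inl ⟨C', hC'C.trans hCS, hC', hC.mono (coe_subset.2 hC'C)⟩
  push Not at hlong
  have hmaps : ∀ x ∈ S, chainHeight r S x ∈ Icc 1 m := fun x hx =>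
    mem_Icc.2 ⟨one_le_chainHeight hx, chainHeight_le hlong x⟩
  obtain ⟨_, -, hfiber⟩ :=
    exists_lt_card_fiber_of_mul_lt_card_of_maps_to hmaps (by simpa using hS)
  obtain ⟨A, hA, hAcard⟩ := exists_subset_card_eq hfiber
  refine Or.inr ⟨A, hA.trans (filter_subset _ _), hAcard, fun x hx y hy _ hxy => ?_⟩
  have hx' := mem_filter.1 (hA hx)
  have hy' := mem_filter.1 (hA hy)
  exact (chainHeight_lt_chainHeight hx'.1 hy'.1 hxy).ne (hx'.2.trans hy'.2.symm)

end Mirsky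

/- `IntervalConsecutive I J` unfolds to `IntervalPrecedes I J ∨ IntervalPrecedes J I`, and
`IntervalParallel I J` to `IntervalEncloses I J ∨ IntervalEncloses J I`, so chains of these
strict orders are literally pairwise consecutive (parallel) families. -/
def IntervalPrecedes (I J : ℝ × ℝ) : Prop :=
  I.1 < I.2 ∧ I.2 < J.1 ∧ J.1 < J.2

def IntervalEncloses (I J : ℝ × ℝ) : Prop :=
  I.1 < J.1 ∧ J.1 < J.2 ∧ J.2 < I.2

instance : IsStrictOrder (ℝ × ℝ) IntervalPrecedes where
  irrefl _ h := h.1.not_gt h.2.1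
  trans _ _ _ h₁ h₂ := ⟨h₁.1, h₁.2.1.trans (h₂.1.trans h₂.2.1), h₂.2.2⟩

instance : IsStrictOrder (ℝ × ℝ) IntervalEncloses where
  irrefl _ h := h.1.false
  trans _ _ _ h₁ h₂ := ⟨h₁.1.trans h₂.1, h₂.2.1, h₂.2.2.trans h₁.2.2⟩

theorem intervalConsecutive_or_crossing_or_parallel {I J : ℝ × ℝ} (hI : I.1 < I.2)
    (hJ : J.1 < J.2) (hIJ : I.1 ≠ J.1 ∧ I.1 ≠ J.2 ∧ I.2 ≠ J.1 ∧ I.2 ≠ J.2) :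
    IntervalConsecutive I J ∨ IntervalCrossing I J ∨ IntervalParallel I J := by
  obtain ⟨h₁, h₂, h₃, h₄⟩ := hIJ
  unfold IntervalConsecutive IntervalCrossing IntervalParallel
  rcases h₁.lt_or_gt with h₁ | h₁
  · rcases h₃.lt_or_gt with h₃ | h₃
    · exact Or.inl (Or.inl ⟨hI, h₃, hJ⟩)
    rcases h₄.lt_or_gt with h₄ | h₄
    · exact Or.inr (Or.inl (Or.inl ⟨h₁, h₃, h₄⟩))
    · exact Or.inr (Or.inr (Or.inl ⟨h₁, hJ, h₄⟩))
  · rcases h₂.lt_or_gt with h₂ | h₂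
    · rcases h₄.lt_or_gt with h₄ | h₄
      · exact Or.inr (Or.inr (Or.inr ⟨h₁, hI, h₄⟩))
      · exact Or.inr (Or.inl (Or.inr ⟨h₁, h₂, h₄⟩))
    · exact Or.inl (Or.inr ⟨hJ, h₂, hI⟩)

/-- Every family of at least `64k³` open intervals with pairwise distinct
endpoints contains a subfamily of `4k` intervals that are pairwise consecutive, pairwise
crossing, or pairwise parallel. -/
theorem stmt_6 (k : ℕ) (hk : 1 ≤ k) (F : Finset (ℝ × ℝ))
    (hint : ∀ I ∈ F, I.1 < I.2)
    (hdist : DistinctEndpoints F)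
    (hcard : 64 * k ^ 3 ≤ F.card) :
    ∃ S ⊆ F, S.card = 4 * k ∧
      ((∀ I ∈ S, ∀ J ∈ S, I ≠ J → IntervalConsecutive I J) ∨
       (∀ I ∈ S, ∀ J ∈ S, I ≠ J → IntervalCrossing I J) ∨
       (∀ I ∈ S, ∀ J ∈ S, I ≠ J → IntervalParallel I J)) := by
  have h4k : 4 * k - 1 + 1 = 4 * k := by omega
  have h16k : 16 * k ^ 2 - 1 + 1 = 16 * k ^ 2 :=
    Nat.sub_add_cancel (Nat.one_le_iff_ne_zero.2 (by positivity))
  obtain ⟨C, hCF, hCcard, hC⟩ | ⟨A, hAF, hAcard, hA⟩ :=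
    exists_chain_or_antichain_card_eq (r := IntervalEncloses) F
      (m := 4 * k - 1) (n := 16 * k ^ 2 - 1) (by
        calc (4 * k - 1) * (16 * k ^ 2 - 1) < 4 * k * (16 * k ^ 2) :=
              Nat.mul_lt_mul_of_lt_of_lt (by omega) (by omega)
          _ = 64 * k ^ 3 := by ring
          _ ≤ #F := hcard)
  · exact ⟨C, hCF, hCcard.trans h4k, Or.inr (Or.inr fun I hI J hJ hne => hC hI hJ hne)⟩
  obtain ⟨C, hCA, hCcard, hC⟩ | ⟨B, hBA, hBcard, hB⟩ :=
    exists_chain_or_antichain_card_eq (r := IntervalPrecedes) A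
      (m := 4 * k - 1) (n := 4 * k - 1) (by
        calc (4 * k - 1) * (4 * k - 1) < 4 * k * (4 * k) :=
              Nat.mul_lt_mul_of_lt_of_lt (by omega) (by omega)
          _ = 16 * k ^ 2 := by ring
          _ = #A := by rw [hAcard, h16k])
  · exact ⟨C, hCA.trans hAF, hCcard.trans h4k, Or.inl fun I hI J hJ hne => hC hI hJ hne⟩
  refine ⟨B, hBA.trans hAF, hBcard.trans h4k, Or.inr (Or.inl fun I hI J hJ hne => ?_)⟩
  have hIF := hAF (hBA hI)
  have hJF := hAF (hBA hJ)
  rcases intervalConsecutive_or_crossing_or_parallel (hint I hIF) (hint J hJF)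
    (hdist I hIF J hJF hne) with hcons | hcross | hpar
  · exact (hcons.elim (hB hI hJ hne) (hB hJ hI hne.symm)).elim
  · exact hcross
  · exact (hpar.elim (hA (hBA hI) (hBA hJ) hne) (hA (hBA hJ) (hBA hI) hne.symm)).elim
end

section
/- Let t ≥ 1 be an integer and let F be a finite family of intervals with pairwise distinct endpoints such that every real number x belongs to at most t intervals of F (i.e., at most t intervals (s,t') ∈ F satisfy s ≤ x ≤ t'). Then F contains at least ⌈|F|/t⌉ pairwise disjoint intervals. -/
lemma IntervalConsecutive.symm {I J : ℝ × ℝ} (h : IntervalConsecutive I J) :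
    IntervalConsecutive J I := h.elim Or.inr Or.inl

lemma stmt8_aux (t : ℕ) (ht : 1 ≤ t) :
    ∀ n (F : Finset (ℝ × ℝ)), F.card ≤ n →
    (∀ I ∈ F, I.1 < I.2) →
    (∀ x : ℝ, (F.filter fun J => J.1 ≤ x ∧ x ≤ J.2).card ≤ t) →
    ∃ S ⊆ F, (F.card + t - 1) / t ≤ S.card ∧
      ∀ I ∈ S, ∀ J ∈ S, I ≠ J → IntervalConsecutive I J := by
  intro n
  induction n with
  | zero =>
    intro F hF _ _
    refine ⟨∅, Finset.empty_subset _, ?_, by simp⟩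
    have : F.card = 0 := by omega
    rw [this]
    simp [Nat.div_eq_of_lt (by omega : t - 1 < t)]
  | succ n ih =>
    intro F hF hint hcov
    classical
    rcases Finset.eq_empty_or_nonempty F with rfl | hne
    · refine ⟨∅, Finset.empty_subset _, ?_, by simp⟩
      simp [Nat.div_eq_of_lt (by omega : t - 1 < t)]
    obtain ⟨I, hI, hImin⟩ := F.exists_min_image Prod.snd hne
    set N : Finset (ℝ × ℝ) := F.filter (fun J => ¬ IntervalConsecutive I J) with hN
    have hIN : I ∈ N := by
      refine Finset.mem_filter.mpr ⟨hI, ?_⟩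
      rintro (⟨h1, h2, h3⟩ | ⟨h1, h2, h3⟩) <;> exact absurd (h2.trans h3) (lt_irrefl _)
    have hNsub : N ⊆ F.filter (fun J => J.1 ≤ I.2 ∧ I.2 ≤ J.2) := by
      intro J hJ
      obtain ⟨hJF, hJc⟩ := Finset.mem_filter.mp hJ
      refine Finset.mem_filter.mpr ⟨hJF, ?_, hImin J hJF⟩
      by_contra hlt
      exact hJc (Or.inl ⟨hint I hI, lt_of_not_ge hlt, hint J hJF⟩)
    have hNt : N.card ≤ t := le_trans (Finset.card_le_card hNsub) (hcov I.2)
    have hN1 : 1 ≤ N.card := Finset.card_pos.mpr ⟨I, hIN⟩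
    have hNF : N ⊆ F := Finset.filter_subset _ _
    set F' := F \ N with hF'
    have hF'card : F'.card = F.card - N.card := Finset.card_sdiff_of_subset hNF
    obtain ⟨S', hS'sub, hS'card, hS'pc⟩ := ih F' (by omega)
      (fun J hJ => hint J (Finset.sdiff_subset hJ))
      (fun x => le_trans (Finset.card_le_card
        (Finset.filter_subset_filter _ Finset.sdiff_subset)) (hcov x))
    have hIS' : I ∉ S' := fun h => (Finset.mem_sdiff.mp (hS'sub h)).2 hIN
    refine ⟨insert I S', Finset.insert_subset hI (hS'sub.trans Finset.sdiff_subset), ?_, ?_⟩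
    · rw [Finset.card_insert_of_notMem hIS']
      have hle : F.card + t - 1 ≤ (F'.card + t - 1) + t := by omega
      calc (F.card + t - 1) / t ≤ ((F'.card + t - 1) + t) / t := Nat.div_le_div_right hle
        _ = (F'.card + t - 1) / t + 1 := Nat.add_div_right _ (by omega)
        _ ≤ S'.card + 1 := by omega
    · have hcons : ∀ J ∈ S', IntervalConsecutive I J := by
        intro J hJ
        have hJF' := Finset.mem_sdiff.mp (hS'sub hJ)
        by_contra hc
        exact hJF'.2 (Finset.mem_filter.mpr ⟨hJF'.1, hc⟩)
      intro A hA B hB hAB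
      rcases Finset.mem_insert.mp hA with rfl | hA' <;>
        rcases Finset.mem_insert.mp hB with rfl | hB'
      · exact absurd rfl hAB
      · exact hcons B hB'
      · exact (hcons A hA').symm
      · exact hS'pc A hA' B hB' hAB

/-- Let `t ≥ 1` and let `F` be a family of open intervals with pairwise
distinct endpoints such that every real number belongs to (the closure of) at most `t`
intervals of `F`.  Then `F` contains at least `⌈|F|/t⌉` pairwise consecutive (hence pairwise
disjoint) intervals.  Here `(F.card + t - 1) / t` is the ceiling of `|F|/t` in natural-number
arithmetic. -/
theorem stmt_8 (t : ℕ) (ht : 1 ≤ t) (F : Finset (ℝ × ℝ))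
    (hint : ∀ I ∈ F, I.1 < I.2)
    (hdist : DistinctEndpoints F)
    (hcover : ∀ x : ℝ, Set.ncard {I : ℝ × ℝ | I ∈ F ∧ I.1 ≤ x ∧ x ≤ I.2} ≤ t) :
    ∃ S ⊆ F, (F.card + t - 1) / t ≤ S.card ∧
      ∀ I ∈ S, ∀ J ∈ S, I ≠ J → IntervalConsecutive I J := by
  apply stmt8_aux t ht F.card F le_rfl hint
  intro x
  have := hcover x
  have heq : {I : ℝ × ℝ | I ∈ F ∧ I.1 ≤ x ∧ x ≤ I.2}
      = ↑(F.filter fun J => J.1 ≤ x ∧ x ≤ J.2) := by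
    ext J; simp [Finset.mem_filter]
  rwa [heq, Set.ncard_coe_finset] at this
end

section
/- Let (G,w) be a weighted graph with girth g = g(G), and let C₁ and C₂ be two distinct shortest cycles of G (each of weight g) sharing at least one vertex. Then either C₁ and C₂ touch (their intersection graph C₁ ∩ C₂ is a path, possibly a single vertex), or there exist two distinct vertices s and t such that V(C₁) ∩ V(C₂) = {s,t}, the distance between s and t along each of C₁ and C₂ is g/2 (both arcs of each cycle between s and t have weight g/2), and C₁ = P₁ ∪ P₂ and C₂ = Q₁ ∪ Q₂ where P₁, P₂, Q₁, Q₂ are four pairwise distinct, pairwise internally vertex-disjoint s–t paths, each of weight g/2. -/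
open SimpleGraph

/-!
Write `S = C₁ ∩ C₂`. If `S` is connected, it is a proper subgraph of `C₁`: since weights are
positive, a cycle contained in another cycle of no larger weight is equal to it. So `S` lies in the
path left after deleting an edge of `C₁` outside `S`, and a connected subgraph of a path is a path.

Otherwise pick `s, t ∈ S` that are not joined inside `S`. Then an `s`-`t` path `A` in `C₁` differs
from both arcs of `C₂` between `s` and `t`, and the union of `A` with either arc contains a cycle,
of weight at least `g`; as the two arcs add up to `g`, `2 w(A) ≥ g`. Hence all four arcs weigh
`g/2`. A third common vertex `x` on an arc of `C₁` cuts it into two lighter pieces; since `s` and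
`t` are not joined inside `S`, one of the pieces joins two vertices not joined inside `S`, which is
impossible.
-/

namespace SimpleGraph

variable {V : Type*} {G : SimpleGraph V}

namespace Subgraph

variable {S : G.Subgraph} {u : V}

lemma Connected.verts_eq_singleton (hS : S.Connected) (hu : u ∈ S.verts)
    (hn : ∀ v, ¬ S.Adj u v) : S.verts = {u} := by
  refine Set.eq_singleton_iff_unique_mem.2 ⟨hu, fun y hy ↦ ?_⟩
  obtain ⟨p, hp⟩ := ((connected_iff_forall_exists_walk_subgraph S).1 hS).2 hu hy
  by_contra hyu
  exact hn _ (hp.2 (p.toSubgraph_adj_snd (Walk.not_nil_of_ne (Ne.symm hyu))))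

lemma subgraphOfAdj_sup_deleteVerts_eq {b : V} (hub : S.Adj u b)
    (hn : S.neighborSet u ⊆ {b}) : G.subgraphOfAdj (S.adj_sub hub) ⊔ S.deleteVerts {u} = S := by
  have hnb : ∀ {v}, S.Adj u v → v = b := fun h ↦ hn h
  ext x y
  · simp only [verts_sup, subgraphOfAdj_verts, deleteVerts_verts, Set.mem_union,
      Set.mem_insert_iff, Set.mem_singleton_iff, Set.mem_sdiff]
    constructor
    · rintro ((rfl | rfl) | ⟨hx, -⟩)
      exacts [hub.fst_mem, hub.snd_mem, hx]
    · intro hx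
      by_cases hxu : x = u <;> simp [hx, hxu]
  · simp only [sup_adj, subgraphOfAdj_adj, deleteVerts_adj, Set.mem_singleton_iff]
    constructor
    · rintro (h | ⟨-, -, -, -, h⟩)
      · rcases Sym2.eq_iff.1 h with ⟨rfl, rfl⟩ | ⟨rfl, rfl⟩
        exacts [hub, hub.symm]
      · exact h
    · intro h
      by_cases hxu : x = u
      · subst hxu; exact Or.inl (by rw [hnb h])
      by_cases hyu : y = u
      · subst hyu; exact Or.inl (by rw [hnb h.symm, Sym2.eq_swap])
      exact Or.inr ⟨h.fst_mem, hxu, h.snd_mem, hyu, h⟩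

end Subgraph

namespace Walk

variable {u v x y s t : V}

def weight (p : G.Walk u v) (w : Sym2 V → ℕ) : ℕ := (p.edges.map w).sum

section Weight

variable (w : Sym2 V → ℕ)

@[simp] lemma weight_append (p : G.Walk u v) (q : G.Walk v x) :
    (p.append q).weight w = p.weight w + q.weight w := by
  simp [weight]

@[simp] lemma weight_reverse (p : G.Walk u v) : p.reverse.weight w = p.weight w := by
  simp [weight, List.sum_reverse]

lemma weight_rotate [DecidableEq V] {c : G.Walk v v} (h : u ∈ c.support) :
    (c.rotate u h).weight w = c.weight w :=
  ((c.rotate_edges u h).perm.map w).sum_eq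

lemma IsSubwalk.weight_le {p : G.Walk u v} {q : G.Walk x y} (h : p.IsSubwalk q) :
    p.weight w ≤ q.weight w :=
  (h.edges_isInfix.sublist.map w).sum_le_sum fun _ _ ↦ Nat.zero_le _

lemma weight_pos_of_ne (hw : ∀ e ∈ G.edgeSet, 0 < w e) (p : G.Walk u v) (huv : u ≠ v) :
    0 < p.weight w := by
  cases p with
  | nil => exact absurd rfl huv
  | cons h p =>
    have := hw _ (G.mem_edgeSet.2 h)
    simp only [weight, edges_cons, List.map_cons, List.sum_cons]
    omega

lemma IsTrail.weight_eq_sum_toFinset [DecidableEq V] {p : G.Walk u v} (hp : p.IsTrail) :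
    p.weight w = ∑ e ∈ p.edges.toFinset, w e :=
  (List.sum_toFinset w hp.edges_nodup).symm

end Weight

lemma toSubgraph_takeUntil_le [DecidableEq V] (p : G.Walk u v) (hx : x ∈ p.support) :
    (p.takeUntil x hx).toSubgraph ≤ p.toSubgraph := by
  conv_rhs => rw [← p.take_spec hx, toSubgraph_append]
  exact le_sup_left

lemma toSubgraph_dropUntil_le [DecidableEq V] (p : G.Walk u v) (hx : x ∈ p.support) :
    (p.dropUntil x hx).toSubgraph ≤ p.toSubgraph := by
  conv_rhs => rw [← p.take_spec hx, toSubgraph_append]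
  exact le_sup_right

lemma le_toSubgraph_of_le_toSubgraph_cons {S : G.Subgraph} {h : G.Adj u v} {p : G.Walk v x}
    (hS : S ≤ (cons h p).toSubgraph) (hu : u ∉ S.verts) : S ≤ p.toSubgraph := by
  refine ⟨fun y hy ↦ ?_, fun y z hyz ↦ ?_⟩
  · have := hS.1 hy
    rw [mem_verts_toSubgraph, support_cons, List.mem_cons] at this
    rcases this with rfl | hy'
    · exact absurd hy hu
    · exact (mem_verts_toSubgraph p).2 hy'
  · rcases hS.2 hyz with h' | h'
    · rw [subgraphOfAdj_adj] at h'
      rcases Sym2.eq_iff.1 h' with ⟨rfl, -⟩ | ⟨rfl, -⟩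
      exacts [absurd hyz.fst_mem hu, absurd hyz.snd_mem hu]
    · exact h'

lemma IsPath.notMem_support_of_subsingleton_neighborSet {S : G.Subgraph} {p : G.Walk u v}
    (hp : p.IsPath) (hpS : p.toSubgraph ≤ S) (hxu : x ≠ u) (hxv : x ≠ v)
    (hx : (S.neighborSet x).Subsingleton) :
    x ∉ p.support := by
  intro hxp
  obtain ⟨i, rfl, hi⟩ := mem_support_iff_exists_getVert.1 hxp
  have hi0 : i ≠ 0 := by rintro rfl; exact hxu p.getVert_zero
  have hil : i < p.length := lt_of_le_of_ne hi (by rintro rfl; exact hxv p.getVert_length)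
  have htwo := hp.ncard_neighborSet_toSubgraph_internal_eq_two hi0 hil
  have hone : (p.toSubgraph.neighborSet (p.getVert i)).Subsingleton :=
    hx.anti (Subgraph.neighborSet_subset_of_subgraph hpS _)
  have : Finite (p.toSubgraph.neighborSet (p.getVert i)) := hone.finite
  have := Set.ncard_le_one_iff_subsingleton.2 hone
  omega

end Walk

lemma Subgraph.Connected.deleteVerts_singleton {S : G.Subgraph} {u : V} (hS : S.Connected)
    (hu : (S.neighborSet u).Subsingleton) (hne : (S.verts \ {u}).Nonempty) :
    (S.deleteVerts {u}).Connected := by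
  classical
  rw [connected_iff_forall_exists_walk_subgraph] at hS ⊢
  refine ⟨hne, fun {x y} hx hy ↦ ?_⟩
  obtain ⟨p, hp⟩ := hS.2 hx.1 hy.1
  have hpS : p.bypass.toSubgraph ≤ S := Walk.toSubgraph_bypass_le_toSubgraph.trans hp
  have hup : u ∉ p.bypass.support :=
    p.bypass_isPath.notMem_support_of_subsingleton_neighborSet hpS (fun h ↦ hx.2 h.symm)
      (fun h ↦ hy.2 h.symm) hu
  refine ⟨p.bypass, fun z hz ↦ ⟨hpS.1 hz, ?_⟩, fun z z' hzz' ↦ ?_⟩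
  · rintro rfl
    exact hup ((Walk.mem_verts_toSubgraph _).1 hz)
  · refine Subgraph.deleteVerts_adj.2
      ⟨hpS.1 hzz'.fst_mem, ?_, hpS.1 hzz'.snd_mem, ?_, hpS.2 hzz'⟩
    · rintro rfl
      exact hup (Walk.mem_support_of_adj_toSubgraph hzz')
    · rintro rfl
      exact hup (Walk.mem_support_of_adj_toSubgraph hzz'.symm)

namespace Walk

variable {u v s t : V}

lemma IsPath.exists_isPath_toSubgraph_eq_of_start_mem {S : G.Subgraph} {q : G.Walk u v}
    (hq : q.IsPath) (hS : S ≤ q.toSubgraph) (hconn : S.Connected) (hu : u ∈ S.verts) :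
    ∃ (x : V) (r : G.Walk u x), r.IsPath ∧ r.toSubgraph = S := by
  induction q generalizing S with
  | nil =>
    exact ⟨_, Walk.nil, IsPath.nil, le_antisymm ((singletonSubgraph_le_iff _ _).2 hu) hS⟩
  | @cons u b v h q ih =>
    -- In `S`, `u` can only be adjacent to `b`: either `S` is the single vertex `u`, or deleting
    -- the leaf `u` leaves a connected subgraph of `q`.
    have hnb : S.neighborSet u ⊆ {b} := fun y hy ↦ by
      simpa using (hq.snd_of_toSubgraph_adj (hS.2 hy)).symm
    by_cases hub : S.Adj u b
    · have hb : b ∈ (S.deleteVerts {u}).verts := ⟨hub.snd_mem, h.ne'⟩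
      obtain ⟨x, r, hr, hrS⟩ := ih ((cons_isPath_iff h q).1 hq).1
        (le_toSubgraph_of_le_toSubgraph_cons (Subgraph.deleteVerts_le.trans hS) (by simp))
        (hconn.deleteVerts_singleton (Set.subsingleton_singleton.anti hnb) ⟨b, hb⟩) hb
      have hur : u ∉ r.support := by
        rw [← mem_verts_toSubgraph, hrS]
        simp
      refine ⟨x, cons h r, hr.cons hur, ?_⟩
      rw [← Subgraph.subgraphOfAdj_sup_deleteVerts_eq hub hnb, ← hrS]
      rfl
    · refine ⟨u, Walk.nil, IsPath.nil, ?_⟩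
      refine ((eq_singletonSubgraph_iff_verts_eq S).2 ?_).symm
      exact hconn.verts_eq_singleton hu fun y hy ↦ hub (by rwa [← hnb hy])

lemma IsPath.exists_isPath_toSubgraph_eq {S : G.Subgraph} {q : G.Walk u v}
    (hq : q.IsPath) (hS : S ≤ q.toSubgraph) (hconn : S.Connected) :
    ∃ (x y : V) (r : G.Walk x y), r.IsPath ∧ r.toSubgraph = S := by
  induction q with
  | nil =>
    obtain ⟨x, hx⟩ := hconn.nonempty
    obtain rfl : x = _ := hS.1 hx
    exact ⟨_, hq.exists_isPath_toSubgraph_eq_of_start_mem hS hconn hx⟩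
  | @cons u b v h q ih =>
    by_cases hu : u ∈ S.verts
    · exact ⟨_, hq.exists_isPath_toSubgraph_eq_of_start_mem hS hconn hu⟩
    · exact ih ((cons_isPath_iff h q).1 hq).1 (le_toSubgraph_of_le_toSubgraph_cons hS hu)

lemma IsCycle.toSubgraph_eq_of_le [DecidableEq V] (w : Sym2 V → ℕ)
    (hw : ∀ e ∈ G.edgeSet, 0 < w e) {c₁ : G.Walk u u} {c₂ : G.Walk v v} (h₁ : c₁.IsCycle)
    (h₂ : c₂.IsCycle)
    (hle : c₁.toSubgraph ≤ c₂.toSubgraph) (hw₂₁ : c₂.weight w ≤ c₁.weight w) :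
    c₁.toSubgraph = c₂.toSubgraph := by
  refine le_antisymm hle ((toSubgraph_le_iff h₂.not_nil).2 fun e he₂ ↦ ?_)
  by_contra he₁
  rw [edgeSet_toSubgraph] at he₁
  have hsub : c₁.edges.toFinset ⊆ c₂.edges.toFinset := fun f hf ↦ by
    simpa using (c₂.edgeSet_toSubgraph ▸ Subgraph.edgeSet_mono hle) (by simpa using hf)
  have := Finset.sum_lt_sum_of_subset hsub (i := e) (by simpa using he₂) (by simpa using he₁)
    (hw e (c₂.edges_subset_edgeSet he₂)) fun _ _ _ ↦ Nat.zero_le _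
  rw [← h₁.isCircuit.isTrail.weight_eq_sum_toFinset,
    ← h₂.isCircuit.isTrail.weight_eq_sum_toFinset] at this
  omega

lemma IsCycle.exists_isPath_le_toSubgraph [DecidableEq V] {S : G.Subgraph} {c : G.Walk u u}
    (hc : c.IsCycle) (hS : S ≤ c.toSubgraph) {e : Sym2 V} (he : e ∈ c.edges)
    (heS : e ∉ S.edgeSet) : ∃ (x y : V) (q : G.Walk x y), q.IsPath ∧ S ≤ q.toSubgraph := by
  induction e with | _ a b =>
  have ha : a ∈ c.support := c.fst_mem_support_of_mem_edges he
  have hdc : (c.rotate a ha).toSubgraph = c.toSubgraph := c.toSubgraph_rotate ha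
  have hb : b ∈ (c.rotate a ha).toSubgraph.neighborSet a := by
    rw [hdc]
    exact adj_toSubgraph_iff_mem_edges.2 he
  rw [(hc.rotate ha).neighborSet_toSubgraph_endpoint] at hb
  -- rotating and possibly reversing `c` makes `s(a, b)` its first edge; `S` then lies in the tail
  obtain ⟨d, hd, hdS, rfl⟩ : ∃ d : G.Walk a a, d.IsCycle ∧ d.toSubgraph = c.toSubgraph ∧
      d.snd = b := by
    rcases hb with rfl | rfl
    · exact ⟨_, hc.rotate ha, hdc, rfl⟩
    · exact ⟨_, (hc.rotate ha).reverse, by rw [toSubgraph_reverse, hdc], snd_reverse _⟩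
  have hsplit : d.toSubgraph = G.subgraphOfAdj (d.adj_snd hd.not_nil) ⊔ d.tail.toSubgraph := by
    conv_lhs => rw [← d.cons_tail_eq hd.not_nil]
    rfl
  rw [← hdS, hsplit] at hS
  refine ⟨_, _, d.tail, hd.isPath_tail, fun y hy ↦ ?_, fun y z hyz ↦ ?_⟩
  · rcases hS.1 hy with (rfl | rfl) | hy'
    exacts [d.tail.end_mem_verts_toSubgraph, d.tail.start_mem_verts_toSubgraph, hy']
  · rcases hS.2 hyz with h | h
    · rw [subgraphOfAdj_adj] at h
      exact absurd (h ▸ hyz : s(a, d.snd) ∈ S.edgeSet) heS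
    · exact h

lemma IsCycle.exists_arcs [DecidableEq V] (w : Sym2 V → ℕ) {c : G.Walk u u} (hc : c.IsCycle)
    (hs : s ∈ c.support) (ht : t ∈ c.support) (hst : s ≠ t) :
    ∃ P₁ P₂ : G.Walk s t, P₁.IsPath ∧ P₂.IsPath ∧ P₁ ≠ P₂ ∧
      P₁.weight w + P₂.weight w = c.weight w ∧ c.toSubgraph = P₁.toSubgraph ⊔ P₂.toSubgraph ∧
      ∀ x ∈ P₁.support, x ∈ P₂.support → x = s ∨ x = t := by
  have hd := hc.rotate hs
  have ht' : t ∈ (c.rotate s hs).support := by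
    rwa [← mem_verts_toSubgraph, c.toSubgraph_rotate hs, mem_verts_toSubgraph]
  have hspec := (c.rotate s hs).take_spec ht'
  set A := (c.rotate s hs).takeUntil t ht'
  set B := (c.rotate s hs).dropUntil t ht'
  have hA : ¬ A.Nil := not_nil_of_ne hst
  have hcyc : (A.append B).IsCycle := by rwa [hspec]
  refine ⟨A, B.reverse, hd.isPath_takeUntil ht', (hcyc.isPath_of_append_right hA).reverse,
    fun hAB ↦ ?_, ?_, ?_, ?_⟩
  · have he : s(s, A.snd) ∈ A.edges := adj_toSubgraph_iff_mem_edges.1 (A.toSubgraph_adj_snd hA)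
    have he' : s(s, A.snd) ∈ B.edges := by simpa [hAB] using he
    exact hd.isCircuit.isTrail.disjoint_edges_takeUntil_dropUntil ht' he he'
  · rw [weight_reverse, ← weight_append, hspec, weight_rotate]
  · rw [toSubgraph_reverse, ← toSubgraph_append, hspec, toSubgraph_rotate]
  · intro x hxA hxB
    rw [support_reverse, List.mem_reverse] at hxB
    by_contra! hx
    have hnd : (A.support.tail ++ B.support.tail).Nodup := by
      rw [← tail_support_append, hspec]
      exact hd.support_nodup
    refine List.disjoint_of_nodup_append hnd (a := x) ?_ ?_
    · exact ((mem_support_iff A).1 hxA).resolve_left hx.1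
    · exact ((mem_support_iff B).1 hxB).resolve_left hx.2

lemma IsPath.exists_isCycle_weight_le_add_of_ne (w : Sym2 V → ℕ) {p q : G.Walk u v}
    (hp : p.IsPath) (hq : q.IsPath) (hne : p ≠ q) :
    ∃ (x : V) (c : G.Walk x x), c.IsCycle ∧ c.weight w ≤ p.weight w + q.weight w := by
  obtain ⟨x, y, p', q', hp', hq', hc⟩ := hp.exists_isCycle_of_ne hq hne
  refine ⟨x, _, hc, ?_⟩
  rw [weight_append, weight_reverse]
  exact add_le_add (hp'.weight_le w) (hq'.weight_le w)

lemma IsCycle.le_two_mul_weight_of_not_toSubgraph_le [DecidableEq V] (w : Sym2 V → ℕ) {g : ℕ}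
    (hg : ∀ (x : V) (d : G.Walk x x), d.IsCycle → g ≤ d.weight w) {c : G.Walk u u}
    (hc : c.IsCycle) (hcg : c.weight w = g) {A : G.Walk s t} (hA : A.IsPath)
    (hs : s ∈ c.support) (ht : t ∈ c.support) (hst : s ≠ t)
    (hAc : ¬ A.toSubgraph ≤ c.toSubgraph) : g ≤ 2 * A.weight w := by
  obtain ⟨P₁, P₂, hP₁, hP₂, -, hPw, hPc, -⟩ := hc.exists_arcs w hs ht hst
  have key : ∀ P : G.Walk s t, P.IsPath → P.toSubgraph ≤ c.toSubgraph →
      g ≤ A.weight w + P.weight w := fun P hP hPc ↦ by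
    obtain ⟨x, d, hd, hdw⟩ :=
      hA.exists_isCycle_weight_le_add_of_ne w hP (by rintro rfl; exact hAc hPc)
    exact (hg x d hd).trans hdw
  have := key P₁ hP₁ (hPc ▸ le_sup_left)
  have := key P₂ hP₂ (hPc ▸ le_sup_right)
  omega

end Walk

open Walk

section ShortestCycles

variable [DecidableEq V] (w : Sym2 V → ℕ) {g : ℕ} {u₁ u₂ s t : V}
  {c₁ : G.Walk u₁ u₁} {c₂ : G.Walk u₂ u₂}

theorem exists_isPath_toSubgraph_eq_inf_of_connected (hw : ∀ e ∈ G.edgeSet, 0 < w e)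
    (h₁ : c₁.IsCycle) (h₂ : c₂.IsCycle) (hw₂₁ : c₂.weight w ≤ c₁.weight w)
    (hne : c₁.toSubgraph ≠ c₂.toSubgraph)
    (hS : (c₁.toSubgraph ⊓ c₂.toSubgraph).Connected) :
    ∃ (x y : V) (r : G.Walk x y), r.IsPath ∧ r.toSubgraph = c₁.toSubgraph ⊓ c₂.toSubgraph := by
  obtain ⟨e, he, heS⟩ : ∃ e ∈ c₁.edges, e ∉ (c₁.toSubgraph ⊓ c₂.toSubgraph).edgeSet := by
    by_contra! h
    have hle := ((toSubgraph_le_iff h₁.not_nil).2 fun e he ↦ h e he).trans inf_le_right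
    exact hne (h₁.toSubgraph_eq_of_le w hw h₂ hle hw₂₁)
  obtain ⟨x, y, q, hq, hSq⟩ := h₁.exists_isPath_le_toSubgraph inf_le_left he heS
  exact hq.exists_isPath_toSubgraph_eq hSq hS

lemma le_two_mul_weight_of_not_joined (hg : ∀ (x : V) (d : G.Walk x x), d.IsCycle → g ≤ d.weight w)
    (h₂ : c₂.IsCycle) (hw₂ : c₂.weight w = g)
    (hs : s ∈ (c₁.toSubgraph ⊓ c₂.toSubgraph).verts)
    (ht : t ∈ (c₁.toSubgraph ⊓ c₂.toSubgraph).verts)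
    (hst : ∀ p : G.Walk s t, ¬ p.toSubgraph ≤ c₁.toSubgraph ⊓ c₂.toSubgraph)
    {A : G.Walk s t} (hA : A.IsPath) (hA₁ : A.toSubgraph ≤ c₁.toSubgraph) :
    g ≤ 2 * A.weight w := by
  refine h₂.le_two_mul_weight_of_not_toSubgraph_le w hg hw₂ hA ((mem_verts_toSubgraph _).1 hs.2)
    ((mem_verts_toSubgraph _).1 ht.2) ?_ fun h ↦ hst A (le_inf hA₁ h)
  rintro rfl
  exact hst Walk.nil ((singletonSubgraph_le_iff _ _).2 hs)

lemma eq_or_eq_of_mem_support_of_not_joined (hw : ∀ e ∈ G.edgeSet, 0 < w e)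
    (hg : ∀ (x : V) (d : G.Walk x x), d.IsCycle → g ≤ d.weight w)
    (h₂ : c₂.IsCycle) (hw₂ : c₂.weight w = g)
    (hs : s ∈ (c₁.toSubgraph ⊓ c₂.toSubgraph).verts)
    (ht : t ∈ (c₁.toSubgraph ⊓ c₂.toSubgraph).verts)
    (hst : ∀ p : G.Walk s t, ¬ p.toSubgraph ≤ c₁.toSubgraph ⊓ c₂.toSubgraph)
    {A : G.Walk s t} (hA : A.IsPath) (hA₁ : A.toSubgraph ≤ c₁.toSubgraph) (hAw : 2 * A.weight w = g)
    {x : V} (hx : x ∈ (c₁.toSubgraph ⊓ c₂.toSubgraph).verts) (hxA : x ∈ A.support) :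
    x = s ∨ x = t := by
  by_contra! hxst
  have hpos₁ := (A.takeUntil x hxA).weight_pos_of_ne w hw hxst.1.symm
  have hpos₂ := (A.dropUntil x hxA).weight_pos_of_ne w hw hxst.2
  have hsum : (A.takeUntil x hxA).weight w + (A.dropUntil x hxA).weight w = A.weight w := by
    rw [← weight_append, take_spec]
  by_cases hsx : ∃ p : G.Walk s x, p.toSubgraph ≤ c₁.toSubgraph ⊓ c₂.toSubgraph
  · obtain ⟨p, hp⟩ := hsx
    have hxt : ∀ q : G.Walk x t, ¬ q.toSubgraph ≤ c₁.toSubgraph ⊓ c₂.toSubgraph := fun q hq ↦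
      hst (p.append q) (by rw [toSubgraph_append]; exact sup_le hp hq)
    have := le_two_mul_weight_of_not_joined w hg h₂ hw₂ hx ht hxt (hA.dropUntil hxA)
      ((A.toSubgraph_dropUntil_le hxA).trans hA₁)
    omega
  · push Not at hsx
    have := le_two_mul_weight_of_not_joined w hg h₂ hw₂ hs hx hsx (hA.takeUntil hxA)
      ((A.toSubgraph_takeUntil_le hxA).trans hA₁)
    omega

lemma verts_inf_eq_pair_of_not_joined (hw : ∀ e ∈ G.edgeSet, 0 < w e)
    (hg : ∀ (x : V) (d : G.Walk x x), d.IsCycle → g ≤ d.weight w)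
    (h₂ : c₂.IsCycle) (hw₂ : c₂.weight w = g)
    (hs : s ∈ (c₁.toSubgraph ⊓ c₂.toSubgraph).verts)
    (ht : t ∈ (c₁.toSubgraph ⊓ c₂.toSubgraph).verts)
    (hst : ∀ p : G.Walk s t, ¬ p.toSubgraph ≤ c₁.toSubgraph ⊓ c₂.toSubgraph)
    {P₁ P₂ : G.Walk s t} (hP₁ : P₁.IsPath) (hP₂ : P₂.IsPath)
    (hPc : c₁.toSubgraph = P₁.toSubgraph ⊔ P₂.toSubgraph)
    (hP₁w : 2 * P₁.weight w = g) (hP₂w : 2 * P₂.weight w = g) :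
    (c₁.toSubgraph ⊓ c₂.toSubgraph).verts = {s, t} := by
  refine Set.Subset.antisymm (fun x hx ↦ ?_)
    (Set.insert_subset hs (Set.singleton_subset_iff.2 ht))
  have hx₁ := hx.1
  rw [hPc, Subgraph.verts_sup] at hx₁
  rcases hx₁ with hx₁ | hx₁
  · exact eq_or_eq_of_mem_support_of_not_joined w hw hg h₂ hw₂ hs ht hst hP₁
      (hPc ▸ le_sup_left) hP₁w hx ((mem_verts_toSubgraph _).1 hx₁)
  · exact eq_or_eq_of_mem_support_of_not_joined w hw hg h₂ hw₂ hs ht hst hP₂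
      (hPc ▸ le_sup_right) hP₂w hx ((mem_verts_toSubgraph _).1 hx₁)

theorem exists_four_paths_of_not_joined (hw : ∀ e ∈ G.edgeSet, 0 < w e)
    (hg : ∀ (x : V) (d : G.Walk x x), d.IsCycle → g ≤ d.weight w)
    (h₁ : c₁.IsCycle) (h₂ : c₂.IsCycle) (hw₁ : c₁.weight w = g) (hw₂ : c₂.weight w = g)
    (hs : s ∈ (c₁.toSubgraph ⊓ c₂.toSubgraph).verts)
    (ht : t ∈ (c₁.toSubgraph ⊓ c₂.toSubgraph).verts)
    (hst : ∀ p : G.Walk s t, ¬ p.toSubgraph ≤ c₁.toSubgraph ⊓ c₂.toSubgraph) :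
    s ≠ t ∧ (c₁.toSubgraph ⊓ c₂.toSubgraph).verts = {s, t} ∧
      ∃ P₁ P₂ Q₁ Q₂ : G.Walk s t,
        P₁.IsPath ∧ P₂.IsPath ∧ Q₁.IsPath ∧ Q₂.IsPath ∧
        2 * P₁.weight w = g ∧ 2 * P₂.weight w = g ∧ 2 * Q₁.weight w = g ∧ 2 * Q₂.weight w = g ∧
        c₁.toSubgraph = P₁.toSubgraph ⊔ P₂.toSubgraph ∧
        c₂.toSubgraph = Q₁.toSubgraph ⊔ Q₂.toSubgraph ∧
        List.Pairwise (fun (A B : G.Walk s t) => A ≠ B ∧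
            ∀ x, x ∈ A.support → x ∈ B.support → x = s ∨ x = t) [P₁, P₂, Q₁, Q₂] := by
  have hst' : s ≠ t := by
    rintro rfl
    exact hst Walk.nil ((singletonSubgraph_le_iff _ _).2 hs)
  have hs₂₁ : s ∈ (c₂.toSubgraph ⊓ c₁.toSubgraph).verts := ⟨hs.2, hs.1⟩
  have ht₂₁ : t ∈ (c₂.toSubgraph ⊓ c₁.toSubgraph).verts := ⟨ht.2, ht.1⟩
  have hst₂₁ : ∀ p : G.Walk s t, ¬ p.toSubgraph ≤ c₂.toSubgraph ⊓ c₁.toSubgraph := by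
    rwa [inf_comm]
  obtain ⟨P₁, P₂, hP₁, hP₂, hP, hPw, hPc, hPint⟩ :=
    h₁.exists_arcs w ((mem_verts_toSubgraph _).1 hs.1) ((mem_verts_toSubgraph _).1 ht.1) hst'
  obtain ⟨Q₁, Q₂, hQ₁, hQ₂, hQ, hQw, hQc, hQint⟩ :=
    h₂.exists_arcs w ((mem_verts_toSubgraph _).1 hs.2) ((mem_verts_toSubgraph _).1 ht.2) hst'
  have hP₁c : P₁.toSubgraph ≤ c₁.toSubgraph := hPc ▸ le_sup_left
  have hP₂c : P₂.toSubgraph ≤ c₁.toSubgraph := hPc ▸ le_sup_right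
  have hQ₁c : Q₁.toSubgraph ≤ c₂.toSubgraph := hQc ▸ le_sup_left
  have hQ₂c : Q₂.toSubgraph ≤ c₂.toSubgraph := hQc ▸ le_sup_right
  have := le_two_mul_weight_of_not_joined w hg h₂ hw₂ hs ht hst hP₁ hP₁c
  have := le_two_mul_weight_of_not_joined w hg h₂ hw₂ hs ht hst hP₂ hP₂c
  have := le_two_mul_weight_of_not_joined w hg h₁ hw₁ hs₂₁ ht₂₁ hst₂₁ hQ₁ hQ₁c
  have := le_two_mul_weight_of_not_joined w hg h₁ hw₁ hs₂₁ ht₂₁ hst₂₁ hQ₂ hQ₂c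
  have hP₁w : 2 * P₁.weight w = g := by omega
  have hP₂w : 2 * P₂.weight w = g := by omega
  have hverts := verts_inf_eq_pair_of_not_joined w hw hg h₂ hw₂ hs ht hst hP₁ hP₂ hPc hP₁w hP₂w
  have cross : ∀ A B : G.Walk s t, A.toSubgraph ≤ c₁.toSubgraph → B.toSubgraph ≤ c₂.toSubgraph →
      A ≠ B ∧ ∀ x, x ∈ A.support → x ∈ B.support → x = s ∨ x = t := by
    refine fun A B hA hB ↦ ⟨by rintro rfl; exact hst A (le_inf hA hB), fun x hxA hxB ↦ ?_⟩
    have hx : x ∈ (c₁.toSubgraph ⊓ c₂.toSubgraph).verts :=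
      ⟨hA.1 ((mem_verts_toSubgraph _).2 hxA), hB.1 ((mem_verts_toSubgraph _).2 hxB)⟩
    simpa [hverts] using hx
  refine ⟨hst', hverts, P₁, P₂, Q₁, Q₂, hP₁, hP₂, hQ₁, hQ₂, hP₁w, hP₂w, by omega, by omega,
    hPc, hQc, ?_⟩
  simp only [List.pairwise_cons, List.mem_cons, List.not_mem_nil, or_false, forall_eq_or_imp,
    forall_eq, IsEmpty.forall_iff, implies_true, List.Pairwise.nil, and_true]
  exact ⟨⟨⟨hP, hPint⟩, cross _ _ hP₁c hQ₁c, cross _ _ hP₁c hQ₂c⟩,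
    ⟨cross _ _ hP₂c hQ₁c, cross _ _ hP₂c hQ₂c⟩, hQ, hQint⟩

end ShortestCycles

end SimpleGraph

theorem stmt_12_general {V : Type*} [DecidableEq V]
    (G : SimpleGraph V) (w : Sym2 V → ℕ)
    (hw : ∀ e ∈ G.edgeSet, 0 < w e) (g : ℕ)
    (hgirth_le : ∀ (v : V) (d : G.Walk v v), d.IsCycle → g ≤ (d.edges.map w).sum)
    (u₁ u₂ : V) (c₁ : G.Walk u₁ u₁) (c₂ : G.Walk u₂ u₂)
    (h₁ : c₁.IsCycle) (h₂ : c₂.IsCycle)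
    (hw₁ : (c₁.edges.map w).sum = g) (hw₂ : (c₂.edges.map w).sum = g)
    (hne : c₁.toSubgraph ≠ c₂.toSubgraph)
    (hshare : ∃ x, x ∈ c₁.support ∧ x ∈ c₂.support) :
    (∃ (x y : V) (r : G.Walk x y), r.IsPath ∧
        r.toSubgraph = c₁.toSubgraph ⊓ c₂.toSubgraph) ∨
    (∃ s t : V, s ≠ t ∧
      (c₁.toSubgraph ⊓ c₂.toSubgraph).verts = {s, t} ∧
      ∃ P₁ P₂ Q₁ Q₂ : G.Walk s t,
        P₁.IsPath ∧ P₂.IsPath ∧ Q₁.IsPath ∧ Q₂.IsPath ∧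
        2 * (P₁.edges.map w).sum = g ∧ 2 * (P₂.edges.map w).sum = g ∧
        2 * (Q₁.edges.map w).sum = g ∧ 2 * (Q₂.edges.map w).sum = g ∧
        c₁.toSubgraph = P₁.toSubgraph ⊔ P₂.toSubgraph ∧
        c₂.toSubgraph = Q₁.toSubgraph ⊔ Q₂.toSubgraph ∧
        List.Pairwise (fun (A B : G.Walk s t) => A ≠ B ∧
            ∀ x, x ∈ A.support → x ∈ B.support → x = s ∨ x = t)
          [P₁, P₂, Q₁, Q₂]) := by
  by_cases hS : (c₁.toSubgraph ⊓ c₂.toSubgraph).Connected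
  · exact Or.inl <| exists_isPath_toSubgraph_eq_inf_of_connected w hw h₁ h₂
      (hw₂.trans hw₁.symm).le hne hS
  · rw [Subgraph.connected_iff_forall_exists_walk_subgraph] at hS
    push Not at hS
    obtain ⟨x, hx₁, hx₂⟩ := hshare
    obtain ⟨s, t, hs, ht, hst⟩ :=
      hS ⟨x, (Walk.mem_verts_toSubgraph _).2 hx₁, (Walk.mem_verts_toSubgraph _).2 hx₂⟩
    exact Or.inr ⟨s, t, exists_four_paths_of_not_joined w hw hgirth_le h₁ h₂ hw₁ hw₂ hs ht hst⟩

/-- Let `(G, w)` be a weighted graph (positive integer edge weights) with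
girth `g` (i.e. `g` is the minimum weight of a cycle of `G`), and let `C₁`, `C₂` be two
distinct shortest cycles (cycles of weight `g`) sharing at least one vertex.  Then either
`C₁` and `C₂` touch (their intersection graph is a path, possibly a single vertex), or there
are two distinct vertices `s`, `t` with `V(C₁) ∩ V(C₂) = {s, t}` such that `C₁ = P₁ ∪ P₂` and
`C₂ = Q₁ ∪ Q₂`, where `P₁, P₂, Q₁, Q₂` are four pairwise distinct, pairwise internally
vertex-disjoint `s`-`t` paths, each of weight `g/2` (so in particular both arcs of each cycle
between `s` and `t` have weight `g/2`). -/
theorem stmt_12 {V : Type*} [Fintype V] [DecidableEq V]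
    (G : SimpleGraph V) (w : Sym2 V → ℕ)
    (hw : ∀ e ∈ G.edgeSet, 0 < w e) (g : ℕ)
    (hgirth_le : ∀ (v : V) (d : G.Walk v v), d.IsCycle → g ≤ (d.edges.map w).sum)
    (hgirth_ex : ∃ (v : V) (d : G.Walk v v), d.IsCycle ∧ (d.edges.map w).sum = g)
    (u₁ u₂ : V) (c₁ : G.Walk u₁ u₁) (c₂ : G.Walk u₂ u₂)
    (h₁ : c₁.IsCycle) (h₂ : c₂.IsCycle)
    (hw₁ : (c₁.edges.map w).sum = g) (hw₂ : (c₂.edges.map w).sum = g)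
    (hne : c₁.toSubgraph ≠ c₂.toSubgraph)
    (hshare : ∃ x, x ∈ c₁.support ∧ x ∈ c₂.support) :
    (∃ (x y : V) (r : G.Walk x y), r.IsPath ∧
        r.toSubgraph = c₁.toSubgraph ⊓ c₂.toSubgraph) ∨
    (∃ s t : V, s ≠ t ∧
      (c₁.toSubgraph ⊓ c₂.toSubgraph).verts = {s, t} ∧
      ∃ P₁ P₂ Q₁ Q₂ : G.Walk s t,
        P₁.IsPath ∧ P₂.IsPath ∧ Q₁.IsPath ∧ Q₂.IsPath ∧
        2 * (P₁.edges.map w).sum = g ∧ 2 * (P₂.edges.map w).sum = g ∧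
        2 * (Q₁.edges.map w).sum = g ∧ 2 * (Q₂.edges.map w).sum = g ∧
        c₁.toSubgraph = P₁.toSubgraph ⊔ P₂.toSubgraph ∧
        c₂.toSubgraph = Q₁.toSubgraph ⊔ Q₂.toSubgraph ∧
        List.Pairwise (fun (A B : G.Walk s t) => A ≠ B ∧
            ∀ x, x ∈ A.support → x ∈ B.support → x = s ∨ x = t)
          [P₁, P₂, Q₁, Q₂]) :=
  stmt_12_general G w hw g hgirth_le u₁ u₂ c₁ c₂ h₁ h₂ hw₁ hw₂ hne hshare
end

section
/- Let (G,w) be a weighted graph with girth g = g(G), and let s and t be distinct vertices of G. If P₁ and P₂ are two distinct s–t paths in G, each of weight exactly g/2 (that is, 2·w(P₁) = 2·w(P₂) = g), then P₁ and P₂ are internally vertex-disjoint (they share no vertex other than s and t). -/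
open SimpleGraph

private lemma sum_le_of_nodup_subset {α : Type*} [DecidableEq α] (w : α → ℕ)
    {l L : List α} (hn : l.Nodup) (hsub : ∀ e ∈ l, e ∈ L) :
    (l.map w).sum ≤ (L.map w).sum := by
  obtain ⟨l', hperm, hsl⟩ := List.subperm_of_subset hn hsub
  calc (l.map w).sum = (l'.map w).sum := ((hperm.map w).sum_eq).symm
    _ ≤ (L.map w).sum := (hsl.map w).sum_le_sum (fun a _ => Nat.zero_le a)

private lemma pos_weight_of_ne {V : Type*} {G : SimpleGraph V} (w : Sym2 V → ℕ)
    (hw : ∀ e ∈ G.edgeSet, 0 < w e) {x y : V} (p : G.Walk x y) (hxy : x ≠ y) :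
    1 ≤ (p.edges.map w).sum := by
  cases p with
  | nil => exact absurd rfl hxy
  | cons h q =>
    simp only [Walk.edges_cons, List.map_cons, List.sum_cons]
    have := hw _ ((G.mem_edgeSet).2 h)
    omega

private lemma key {V : Type*} [DecidableEq V] (G : SimpleGraph V) (w : Sym2 V → ℕ) (g : ℕ)
    (hg : ∀ (v : V) (d : G.Walk v v), d.IsCycle → g ≤ (d.edges.map w).sum)
    {u v : V} (A B : G.Walk u v) (hA : A.IsPath) (hB : B.IsPath) (hAB : A ≠ B) :
    g ≤ (A.edges.map w).sum + (B.edges.map w).sum := by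
  classical
  set S : Set (Sym2 V) := {e | e ∈ A.edges ∨ e ∈ B.edges} with hS
  set H : SimpleGraph V := SimpleGraph.fromEdgeSet S with hH
  have hle : H.edgeSet ⊆ G.edgeSet := by
    rw [hH, SimpleGraph.edgeSet_fromEdgeSet]
    rintro e ⟨he, -⟩
    rcases he with h | h
    · exact A.edges_subset_edgeSet h
    · exact B.edges_subset_edgeSet h
  have hAe : ∀ e ∈ A.edges, e ∈ H.edgeSet := by
    intro e he
    rw [hH, SimpleGraph.edgeSet_fromEdgeSet]
    exact ⟨Or.inl he, G.not_isDiag_of_mem_edgeSet (A.edges_subset_edgeSet he)⟩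
  have hBe : ∀ e ∈ B.edges, e ∈ H.edgeSet := by
    intro e he
    rw [hH, SimpleGraph.edgeSet_fromEdgeSet]
    exact ⟨Or.inr he, G.not_isDiag_of_mem_edgeSet (B.edges_subset_edgeSet he)⟩
  set A' : H.Walk u v := A.transfer H hAe with hA'def
  set B' : H.Walk u v := B.transfer H hBe with hB'def
  have hback : ∀ (W : H.Walk u v), ∀ e ∈ W.edges, e ∈ G.edgeSet :=
    fun W e he => hle (W.edges_subset_edgeSet he)
  have hA'B' : A' ≠ B' := by
    intro h
    apply hAB
    have := congrArg (fun W : H.Walk u v => W.transfer G (hback W)) h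
    simpa [hA'def, hB'def, Walk.transfer_transfer, Walk.transfer_self] using this
  have hnac : ¬ H.IsAcyclic := by
    intro hac
    have := isAcyclic_iff_path_unique.mp hac ⟨A', hA.transfer hAe⟩ ⟨B', hB.transfer hBe⟩
    exact hA'B' (congrArg Subtype.val this)
  rw [SimpleGraph.IsAcyclic] at hnac
  push_neg at hnac
  obtain ⟨x, c, hc⟩ := hnac
  have hce : ∀ e ∈ c.edges, e ∈ G.edgeSet := fun e he => hle (c.edges_subset_edgeSet he)
  have hgc := hg x (c.transfer G hce) (hc.transfer hce)
  rw [Walk.edges_transfer] at hgc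
  refine hgc.trans ?_
  have hsub : ∀ e ∈ c.edges, e ∈ A.edges ++ B.edges := by
    intro e he
    have := c.edges_subset_edgeSet he
    rw [hH, SimpleGraph.edgeSet_fromEdgeSet] at this
    rcases this.1 with h | h
    · exact List.mem_append_left _ h
    · exact List.mem_append_right _ h
  have := sum_le_of_nodup_subset w hc.edges_nodup hsub
  rwa [List.map_append, List.sum_append] at this

/-- Let `(G, w)` be a weighted graph (positive integer edge weights) with
girth `g` (i.e. `g` is the minimum weight of a cycle of `G`), and let `s ≠ t` be vertices.
If `P₁` and `P₂` are two distinct `s`-`t` paths, each of weight exactly `g/2` (that is,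
`2·w(P₁) = 2·w(P₂) = g`), then `P₁` and `P₂` are internally vertex-disjoint: they share no
vertex other than `s` and `t`. -/
theorem stmt_13 {V : Type*} [Fintype V] [DecidableEq V]
    (G : SimpleGraph V) (w : Sym2 V → ℕ)
    (hw : ∀ e ∈ G.edgeSet, 0 < w e) (g : ℕ)
    (hgirth_le : ∀ (v : V) (d : G.Walk v v), d.IsCycle → g ≤ (d.edges.map w).sum)
    (hgirth_ex : ∃ (v : V) (d : G.Walk v v), d.IsCycle ∧ (d.edges.map w).sum = g)
    (s t : V) (hst : s ≠ t)
    (P₁ P₂ : G.Walk s t) (h₁ : P₁.IsPath) (h₂ : P₂.IsPath) (hne : P₁ ≠ P₂)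
    (hw₁ : 2 * (P₁.edges.map w).sum = g) (hw₂ : 2 * (P₂.edges.map w).sum = g) :
    ∀ x, x ∈ P₁.support → x ∈ P₂.support → x = s ∨ x = t := by
  intro x hx₁ hx₂
  by_contra hxc
  push_neg at hxc
  obtain ⟨hxs, hxt⟩ := hxc
  set A₁ := P₁.takeUntil x hx₁ with hA₁def
  set B₁ := P₁.dropUntil x hx₁ with hB₁def
  set A₂ := P₂.takeUntil x hx₂ with hA₂def
  set B₂ := P₂.dropUntil x hx₂ with hB₂def
  have hsp₁ : A₁.append B₁ = P₁ := Walk.take_spec P₁ hx₁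
  have hsp₂ : A₂.append B₂ = P₂ := Walk.take_spec P₂ hx₂
  have hsum₁ : (A₁.edges.map w).sum + (B₁.edges.map w).sum = (P₁.edges.map w).sum := by
    rw [← hsp₁, Walk.edges_append, List.map_append, List.sum_append]
  have hsum₂ : (A₂.edges.map w).sum + (B₂.edges.map w).sum = (P₂.edges.map w).sum := by
    rw [← hsp₂, Walk.edges_append, List.map_append, List.sum_append]
  have hApos : 1 ≤ (A₁.edges.map w).sum :=
    pos_weight_of_ne w hw A₁ (fun h => hxs h.symm)
  have hBpos : 1 ≤ (B₁.edges.map w).sum := pos_weight_of_ne w hw B₁ hxt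
  by_cases hA : A₁ = A₂
  · have hB : B₁ ≠ B₂ := by
      intro h
      exact hne (by rw [← hsp₁, ← hsp₂, hA, h])
    have := key G w g hgirth_le B₁ B₂ (h₁.dropUntil hx₁) (h₂.dropUntil hx₂) hB
    omega
  · have := key G w g hgirth_le A₁ A₂ (h₁.takeUntil hx₁) (h₂.takeUntil hx₂) hA
    have hBpos₂ : 1 ≤ (B₂.edges.map w).sum := pos_weight_of_ne w hw B₂ hxt
    omega
end

section
/- Let p ≥ 1 and let C₀, C₁, …, C_p be p+1 pairwise distinct cycles in a graph such that any two of them are either vertex-disjoint or intersect in a path (their intersection graph is a path, possibly a single vertex). Then the number of vertices of degree at least 3 in the union graph C₀ ∪ C₁ ∪ ⋯ ∪ C_p is at most p·(p+1). -/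
/-!
In a cycle every vertex has at most two neighbours. Hence a vertex `v` of degree at least three
in the union lies on two cycles `Cᵢ`, `Cⱼ` whose neighbourhoods of `v` differ. Then `v` has at
most one neighbour in `Cᵢ ∩ Cⱼ`, since two common neighbours would fill up both neighbourhoods,
so `v` is an end of the path `Cᵢ ∩ Cⱼ`. Each of the `(p + 1).choose 2` pairs contributes at most
two ends, and `2 * (p + 1).choose 2 = p * (p + 1)`.
-/

open SimpleGraph

namespace SimpleGraph

variable {V : Type*} {G : SimpleGraph V}

def Subgraph.endVerts (H : G.Subgraph) : Set V :=
  {v | v ∈ H.verts ∧ (H.neighborSet v).ncard ≤ 1}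

namespace Walk

lemma IsCycle.encard_neighborSet_toSubgraph_le_two {u : V} {c : G.Walk u u} (hc : c.IsCycle)
    (v : V) : (c.toSubgraph.neighborSet v).encard ≤ 2 := by
  by_cases hv : v ∈ c.support
  · rw [← c.finite_neighborSet_toSubgraph.cast_ncard_eq,
      hc.ncard_neighborSet_toSubgraph_eq_two hv]
    rfl
  · have : c.toSubgraph.neighborSet v = ∅ := by
      ext w
      simp only [Subgraph.mem_neighborSet, Set.mem_empty_iff_false, iff_false]
      exact fun hadj => hv (c.mem_verts_toSubgraph.mp hadj.fst_mem)
    simp [this]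

lemma IsPath.endVerts_toSubgraph_subset {x y : V} {r : G.Walk x y} (hr : r.IsPath) :
    r.toSubgraph.endVerts ⊆ {x, y} := by
  rintro v ⟨hv, hdeg⟩
  obtain ⟨i, rfl, hi⟩ := mem_support_iff_exists_getVert.mp (r.mem_verts_toSubgraph.mp hv)
  by_cases h0 : i = 0
  · simp [h0]
  by_cases hlen : i = r.length
  · simp [hlen]
  have := hr.ncard_neighborSet_toSubgraph_internal_eq_two h0 (by omega)
  omega

end Walk

lemma Subgraph.exists_ne_mem_endVerts_inf {ι : Type*} {H : ι → G.Subgraph}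
    (hH : ∀ i v, ((H i).neighborSet v).encard ≤ 2) {v : V}
    (hv : 3 ≤ ((⨆ i, H i).neighborSet v).ncard) :
    ∃ i j, i ≠ j ∧ v ∈ (H i ⊓ H j).endVerts := by
  rw [neighborSet_iSup] at hv
  obtain ⟨i, w, hw⟩ : ∃ i, ((H i).neighborSet v).Nonempty := by
    by_contra! h
    simp [Set.iUnion_eq_empty.mpr h] at hv
  obtain ⟨j, hji⟩ : ∃ j, ¬ (H j).neighborSet v ⊆ (H i).neighborSet v := by
    by_contra! h
    have := Set.encard_le_coe_iff_finite_ncard_le (k := 2) |>.mp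
      ((Set.encard_le_encard (Set.iUnion_subset h)).trans (hH i v))
    omega
  obtain ⟨w', hw'⟩ := Set.not_subset.mp hji
  refine ⟨i, j, fun hij => hji (hij ▸ subset_rfl), ⟨hw.fst_mem, hw'.1.fst_mem⟩, ?_⟩
  by_contra! hdeg
  rw [neighborSet_inf] at hdeg
  have hfin : ((H i).neighborSet v ∩ (H j).neighborSet v).Finite :=
    Set.finite_of_ncard_pos (by omega)
  have h2 : (2 : ℕ∞) ≤ ((H i).neighborSet v ∩ (H j).neighborSet v).encard := by
    rw [← hfin.cast_ncard_eq]; exact_mod_cast hdeg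
  have hi := hfin.eq_of_subset_of_encard_le Set.inter_subset_left ((hH i v).trans h2)
  have hj := hfin.eq_of_subset_of_encard_le Set.inter_subset_right ((hH j v).trans h2)
  exact hji (hj ▸ hi ▸ Set.inter_subset_left)

end SimpleGraph

lemma Fin.encard_iUnion_iUnion_Iio_le {α : Type*} {n k : ℕ} (s : Fin n → Fin n → Set α)
    (hs : ∀ i j, i < j → (s i j).encard ≤ k) :
    (⋃ j, ⋃ i ∈ Finset.Iio j, s i j).encard ≤ k * n.choose 2 :=
  calc (⋃ j, ⋃ i ∈ Finset.Iio j, s i j).encard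
      ≤ ∑ j, ∑ i ∈ Finset.Iio j, (s i j).encard :=
        (Set.encard_iUnion_le_of_fintype _).trans
          (Finset.sum_le_sum fun j _ => Finset.set_encard_biUnion_le _ _)
    _ ≤ ∑ j, ∑ i ∈ Finset.Iio j, (k : ℕ∞) :=
        Finset.sum_le_sum fun j _ => Finset.sum_le_sum fun i hi => hs i j (Finset.mem_Iio.mp hi)
    _ = k * n.choose 2 := by
        simp only [Finset.sum_const, Fin.card_Iio, nsmul_eq_mul]
        rw [← Finset.sum_mul, mul_comm, ← Nat.cast_sum,
          Fin.sum_univ_eq_sum_range (fun j => j), Finset.sum_range_id, Nat.choose_two_right]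

theorem stmt_15_general {V : Type*}
    (G : SimpleGraph V) (p : ℕ)
    (u : Fin (p + 1) → V) (c : (i : Fin (p + 1)) → G.Walk (u i) (u i))
    (hcyc : ∀ i, (c i).IsCycle)
    (hint : ∀ i j, i ≠ j →
      ((c i).toSubgraph.verts ∩ (c j).toSubgraph.verts = ∅) ∨
      ∃ (x y : V) (r : G.Walk x y), r.IsPath ∧
        r.toSubgraph = (c i).toSubgraph ⊓ (c j).toSubgraph) :
    Set.ncard {v : V | 3 ≤ ((⨆ i, (c i).toSubgraph).neighborSet v).ncard} ≤ p * (p + 1) := by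
  let T i j := ((c i).toSubgraph ⊓ (c j).toSubgraph).endVerts
  have hcover : {v : V | 3 ≤ ((⨆ i, (c i).toSubgraph).neighborSet v).ncard} ⊆
      ⋃ j, ⋃ i ∈ Finset.Iio j, T i j := by
    intro v hv
    obtain ⟨i, j, hij, hvij⟩ := Subgraph.exists_ne_mem_endVerts_inf
      (fun i => (hcyc i).encard_neighborSet_toSubgraph_le_two) hv
    simp only [Set.mem_iUnion, Finset.mem_Iio, exists_prop]
    rcases hij.lt_or_gt with h | h
    · exact ⟨j, i, h, hvij⟩
    · rw [inf_comm] at hvij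
      exact ⟨i, j, h, hvij⟩
  have hT : ∀ i j, i < j → (T i j).encard ≤ 2 := by
    intro i j hij
    rcases hint i j hij.ne with hdisj | ⟨x, y, r, hr, hrij⟩
    · simp [Set.subset_eq_empty (fun v (hv : v ∈ T i j) => hv.1) hdisj]
    · calc (T i j).encard ≤ ({x, y} : Set V).encard :=
            Set.encard_le_encard (by simp only [T, ← hrij]; exact hr.endVerts_toSubgraph_subset)
        _ ≤ 2 := (Set.encard_insert_le _ _).trans
            (by rw [Set.encard_singleton, one_add_one_eq_two])
  have hpairs : 2 * (p + 1).choose 2 = p * (p + 1) := by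
    rw [Nat.choose_two_right, Nat.add_sub_cancel, mul_comm (p + 1),
      Nat.mul_div_cancel' (Nat.even_mul_succ_self p).two_dvd]
  have hbound := (Set.encard_le_encard hcover).trans (Fin.encard_iUnion_iUnion_Iio_le T hT)
  rw [← Nat.cast_ofNat, ← Nat.cast_mul, hpairs] at hbound
  exact (Set.encard_le_coe_iff_finite_ncard_le.mp hbound).2

/-- Let `p ≥ 1` and let `C₀, C₁, …, C_p` be `p + 1` pairwise distinct cycles
in a graph such that any two of them are either vertex-disjoint or intersect in a path (their
intersection graph is a path, possibly a single vertex).  Then the union graph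
`C₀ ∪ C₁ ∪ ⋯ ∪ C_p` has at most `p·(p+1)` vertices of degree at least `3` (the degree of `v`
being the number of neighbours of `v` in the union subgraph). -/
theorem stmt_15 {V : Type*} [Fintype V] [DecidableEq V]
    (G : SimpleGraph V) (p : ℕ) (hp : 1 ≤ p)
    (u : Fin (p + 1) → V) (c : (i : Fin (p + 1)) → G.Walk (u i) (u i))
    (hcyc : ∀ i, (c i).IsCycle)
    (hdist : ∀ i j, i ≠ j → (c i).toSubgraph ≠ (c j).toSubgraph)
    (hint : ∀ i j, i ≠ j →
      ((c i).toSubgraph.verts ∩ (c j).toSubgraph.verts = ∅) ∨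
      ∃ (x y : V) (r : G.Walk x y), r.IsPath ∧
        r.toSubgraph = (c i).toSubgraph ⊓ (c j).toSubgraph) :
    Set.ncard {v : V | 3 ≤ ((⨆ i, (c i).toSubgraph).neighborSet v).ncard} ≤ p * (p + 1) :=
  stmt_15_general G p u c hcyc hint
end
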